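/- arXiv:1405.3595 — 10 statements merged into one kernel-verified Lean document; each statement's English description precedes it below -/
import Mathlib

section
/- Let ABCD be a quadrilateral in the plane, E = AC ∩ BD, and let M ∈ AC and N ∈ BD be points such that BM ∥ AD and AN ∥ BC. Then MN ∥ CD. -/
/-!
Measure everything from `A` in the frame `x = C - A`, `y = D - A`, and write
`M - A = s x`, `M - B = t y`, `N - B = u (D - B)`, `N - A = v (C - B)`.
Computing `N - A` once through `B` and once directly, and comparing coefficients in the
frame, gives `v = w s` and `u = w t` with `w = 1 + v - u`. Hence `u s = v t`, which is
exactly what makes `N - M = v (1 - s) x + v t y - s x` equal to `v t (y - x) = v t (D - C)`.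
-/

variable {k V P : Type*}

section Field

variable [Field k] [AddCommGroup V] [Module k V] [AddTorsor V P]

theorem linearIndependent_vsub_of_not_collinear {p₁ p₂ p₃ : P}
    (h : ¬Collinear k ({p₁, p₂, p₃} : Set P)) :
    LinearIndependent k ![p₂ -ᵥ p₁, p₃ -ᵥ p₁] := by
  rw [← affineIndependent_iff_not_collinear_set,
    affineIndependent_iff_linearIndependent_vsub k _ (0 : Fin 3),
    ← linearIndependent_equiv (finSuccAboveEquiv (0 : Fin 3))] at h
  convert! h using 1
  ext i
  fin_cases i <;> rfl

theorem Collinear.exists_vsub_eq_smul_vsub {p₁ p₂ p : P}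
    (h : Collinear k ({p₁, p₂, p} : Set P)) (hp₁p₂ : p₁ ≠ p₂) :
    ∃ r : k, p -ᵥ p₁ = r • (p₂ -ᵥ p₁) := by
  have hp : p ∈ line[k, p₁, p₂] :=
    h.mem_affineSpan_of_mem_of_ne (by simp) (by simp) (by simp) hp₁p₂
  rw [← vsub_vadd p p₁, vadd_left_mem_affineSpan_pair] at hp
  obtain ⟨r, hr⟩ := hp
  exact ⟨r, hr.symm⟩

end Field

section CommRing

variable [CommRing k] [AddCommGroup V] [Module k V] [AddTorsor V P]

theorem exists_vsub_eq_smul_vsub_of_parallels {A B C D M N : P}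
    (hACD : LinearIndependent k ![C -ᵥ A, D -ᵥ A])
    (hM : ∃ s : k, M -ᵥ A = s • (C -ᵥ A)) (hN : ∃ u : k, N -ᵥ B = u • (D -ᵥ B))
    (hBM : ∃ t : k, M -ᵥ B = t • (D -ᵥ A)) (hAN : ∃ v : k, N -ᵥ A = v • (C -ᵥ B)) :
    ∃ r : k, N -ᵥ M = r • (D -ᵥ C) := by
  obtain ⟨s, hs⟩ := hM
  obtain ⟨u, hu⟩ := hN
  obtain ⟨t, ht⟩ := hBM
  obtain ⟨v, hv⟩ := hAN
  rw [← vsub_sub_vsub_cancel_right M B A] at ht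
  rw [← vsub_sub_vsub_cancel_right N B A, ← vsub_sub_vsub_cancel_right D B A] at hu
  rw [← vsub_sub_vsub_cancel_right C B A] at hv
  have hcoeff : (v - (1 + v - u) * s) • (C -ᵥ A) + ((1 + v - u) * t - u) • (D -ᵥ A) = 0 := by
    linear_combination (norm := module) hu - hv + (1 + v - u) • (hs - ht)
  obtain ⟨hvs, hut⟩ := LinearIndependent.pair_iff.1 hACD _ _ hcoeff
  refine ⟨v * t, ?_⟩
  rw [← vsub_sub_vsub_cancel_right N M A, ← vsub_sub_vsub_cancel_right D C A]
  linear_combination (norm := module)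
    hv - hs - v • (hs - ht) + ((1 + t) * hvs + s * hut) • (C -ᵥ A)

end CommRing

theorem sharygin_problem_general (A B C D M N : ℝ × ℝ)
    (hACD : ¬ Collinear ℝ ({A, C, D} : Set (ℝ × ℝ)))
    (hBCD : ¬ Collinear ℝ ({B, C, D} : Set (ℝ × ℝ)))
    (hM : Collinear ℝ ({A, C, M} : Set (ℝ × ℝ)))
    (hN : Collinear ℝ ({B, D, N} : Set (ℝ × ℝ)))
    (hpar1 : ∃ t : ℝ, M - B = t • (D - A))
    (hpar2 : ∃ t : ℝ, N - A = t • (C - B)) :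
    ∃ t : ℝ, N - M = t • (D - C) :=
  exists_vsub_eq_smul_vsub_of_parallels (linearIndependent_vsub_of_not_collinear hACD)
    (hM.exists_vsub_eq_smul_vsub (ne₁₂_of_not_collinear hACD))
    (hN.exists_vsub_eq_smul_vsub (ne₁₃_of_not_collinear hBCD)) hpar1 hpar2

/-- **Sharygin's problem.** Let `ABCD` be a quadrilateral in the plane (no three of the
points collinear), `E = AC ∩ BD`, and let `M ∈ AC`, `N ∈ BD` be points with
`BM ∥ AD` and `AN ∥ BC`.  Then `MN ∥ CD`. -/
theorem sharygin_problem (A B C D E M N : ℝ × ℝ)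
    (hABC : ¬ Collinear ℝ ({A, B, C} : Set (ℝ × ℝ)))
    (hABD : ¬ Collinear ℝ ({A, B, D} : Set (ℝ × ℝ)))
    (hACD : ¬ Collinear ℝ ({A, C, D} : Set (ℝ × ℝ)))
    (hBCD : ¬ Collinear ℝ ({B, C, D} : Set (ℝ × ℝ)))
    (hE1 : Collinear ℝ ({A, C, E} : Set (ℝ × ℝ)))
    (hE2 : Collinear ℝ ({B, D, E} : Set (ℝ × ℝ)))
    (hM : Collinear ℝ ({A, C, M} : Set (ℝ × ℝ)))
    (hN : Collinear ℝ ({B, D, N} : Set (ℝ × ℝ)))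
    (hBM : B ≠ M) (hAN : A ≠ N)
    (hpar1 : ∃ t : ℝ, M - B = t • (D - A))
    (hpar2 : ∃ t : ℝ, N - A = t • (C - B)) :
    ∃ t : ℝ, N - M = t • (D - C) :=
  sharygin_problem_general A B C D M N hACD hBCD hM hN hpar1 hpar2
end

section
/- (Pappus) Let g and g' be two distinct lines in the projective plane, with A, B, C on g and A', B', C' on g', all six points distinct from the intersection g ∩ g'. Then the points P = BC' ∩ CB', Q = AC' ∩ CA', and R = AB' ∩ BA' are collinear. -/
/-!
Write `[x y z]` for the determinant of three vectors. Since `a ≠ b` and `a, b, c` lie on a line,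
`c = s a + t b`, and likewise `c' = s' a' + t' b'`. The identity
`(x × y) × (z × w) = [x y w] z - [x y z] w` puts `P`, `Q`, `R` in the spans of `{c, b'}`, `{c, a'}`,
`{b, a'}` with bracket coefficients, so by multilinearity `[P Q R]` becomes a polynomial in
`s, t, s', t'` and the four brackets of `a, b, a', b'`, which vanishes identically.
-/

open Matrix

noncomputable section

/-- A point (or line) of the real projective plane, represented by a vector of
homogeneous coordinates in `ℝ³`. -/
abbrev PPt : Type := Fin 3 → ℝ

/-- The cross product: used both for the join of two points (giving the line through
them as a covector) and for the meet of two lines (giving their intersection point). -/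
def pcross (a b : PPt) : PPt := crossProduct a b

/-- Three points (or three lines) are collinear (resp. concurrent) iff the determinant
of their homogeneous coordinates vanishes. -/
def collin (a b c : PPt) : Prop := Matrix.det (Matrix.of ![a, b, c]) = 0

section Brackets

variable {R : Type*} [CommRing R]

theorem triple_product_apply (u v w : Fin 3 → R) :
    u ⬝ᵥ v ⨯₃ w = u 0 * (v 1 * w 2 - v 2 * w 1) + u 1 * (v 2 * w 0 - v 0 * w 2)
      + u 2 * (v 0 * w 1 - v 1 * w 0) := by
  rw [vec3_dotProduct, cross_apply]
  simp

theorem cross_cross_cross (x y z w : Fin 3 → R) :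
    (x ⨯₃ y) ⨯₃ (z ⨯₃ w) = (x ⬝ᵥ y ⨯₃ w) • z - (x ⬝ᵥ y ⨯₃ z) • w := by
  rw [cross_cross_eq_smul_sub_smul', dotProduct_comm, triple_product_permutation w,
    triple_product_permutation z]

theorem det_smul_sub_smul_rows (x y z w : Fin 3 → R) (p q p' q' r r' : R) :
    det (of ![p • x - q • y, p' • x - q' • z, r • w - r' • z]) =
      -(p * q' * r * (x ⬝ᵥ z ⨯₃ w)) - q * p' * r * (y ⬝ᵥ x ⨯₃ w)
        + q * p' * r' * (y ⬝ᵥ x ⨯₃ z) + q * q' * r * (y ⬝ᵥ z ⨯₃ w) := by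
  simp only [det_fin_three, of_apply, cons_val', cons_val_fin_one, cons_val_zero, cons_val_one,
    cons_val, Pi.sub_apply, Pi.smul_apply, smul_eq_mul, triple_product_apply]
  ring

theorem det_pappus_eq_zero {a b c a' b' c' : Fin 3 → R} {s t s' t' : R}
    (hc : c = s • a + t • b) (hc' : c' = s' • a' + t' • b') :
    det (of ![(b ⨯₃ c') ⨯₃ (c ⨯₃ b'), (a ⨯₃ c') ⨯₃ (c ⨯₃ a'), (a ⨯₃ b') ⨯₃ (b ⨯₃ a')]) = 0 := by
  set A := a ⬝ᵥ b ⨯₃ a'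
  set B := a ⬝ᵥ b ⨯₃ b'
  set C := a ⬝ᵥ a' ⨯₃ b'
  set D := b ⬝ᵥ a' ⨯₃ b'
  obtain ⟨hbc'b', hbc'c, hac'a', hac'c, hab'a', hab'b, hca'b, hb'cb, hb'ca', hb'a'b⟩ :
      b ⬝ᵥ c' ⨯₃ b' = s' * D ∧ b ⬝ᵥ c' ⨯₃ c = s * (s' * A + t' * B) ∧
      a ⬝ᵥ c' ⨯₃ a' = -(t' * C) ∧ a ⬝ᵥ c' ⨯₃ c = -(t * (s' * A + t' * B)) ∧
      a ⬝ᵥ b' ⨯₃ a' = -C ∧ a ⬝ᵥ b' ⨯₃ b = -B ∧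
      c ⬝ᵥ a' ⨯₃ b = -(s * A) ∧ b' ⬝ᵥ c ⨯₃ b = s * B ∧
      b' ⬝ᵥ c ⨯₃ a' = s * C + t * D ∧ b' ⬝ᵥ a' ⨯₃ b = -D := by
    simp only [A, B, C, D, hc, hc', triple_product_apply, Pi.add_apply, Pi.smul_apply, smul_eq_mul]
    refine ⟨?_, ?_, ?_, ?_, ?_, ?_, ?_, ?_, ?_, ?_⟩ <;> ring
  rw [cross_cross_cross, cross_cross_cross, cross_cross_cross, det_smul_sub_smul_rows,
    hbc'b', hbc'c, hac'a', hac'c, hab'a', hab'b, hca'b, hb'cb, hb'ca', hb'a'b]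
  ring

end Brackets

section Incidence

variable {K : Type*} [Field K]

theorem det_eq_zero_of_dotProduct_eq_zero {g u v w : Fin 3 → K} (hg : g ≠ 0)
    (hu : u ⬝ᵥ g = 0) (hv : v ⬝ᵥ g = 0) (hw : w ⬝ᵥ g = 0) :
    det (of ![u, v, w]) = 0 := by
  rw [← exists_mulVec_eq_zero_iff]
  refine ⟨g, hg, ?_⟩
  ext i
  fin_cases i <;> simp [mulVec, hu, hv, hw]

theorem exists_eq_smul_add_smul_of_dotProduct_eq_zero {g a b c : Fin 3 → K} (hg : g ≠ 0)
    (hab : a ⨯₃ b ≠ 0) (ha : a ⬝ᵥ g = 0) (hb : b ⬝ᵥ g = 0) (hc : c ⬝ᵥ g = 0) :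
    ∃ s t : K, c = s • a + t • b := by
  have hdep : ¬ LinearIndependent K ![c, a, b] := by
    rw [show ![c, a, b] = (of ![c, a, b]).row from rfl, linearIndependent_rows_iff_isUnit,
      isUnit_iff_isUnit_det, det_eq_zero_of_dotProduct_eq_zero hg hc ha hb]
    exact not_isUnit_zero
  rw [show ![c, a, b] = Fin.cons c ![a, b] from rfl, linearIndependent_finCons,
    ← crossProduct_ne_zero_iff_linearIndependent, range_cons_cons_empty] at hdep
  obtain ⟨s, t, hst⟩ := Submodule.mem_span_pair.mp (not_not.mp (not_and.mp hdep hab))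
  exact ⟨s, t, hst.symm⟩

end Incidence

theorem pappus_general (g g' a b c a' b' c' P Q R : PPt)
    (hgg' : pcross g g' ≠ 0)
    (ha : a ⬝ᵥ g = 0) (hb : b ⬝ᵥ g = 0) (hc : c ⬝ᵥ g = 0)
    (ha' : a' ⬝ᵥ g' = 0) (hb' : b' ⬝ᵥ g' = 0) (hc' : c' ⬝ᵥ g' = 0)
    (hab : pcross a b ≠ 0)
    (ha'b' : pcross a' b' ≠ 0)
    (hP : P = pcross (pcross b c') (pcross c b'))
    (hQ : Q = pcross (pcross a c') (pcross c a'))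
    (hR : R = pcross (pcross a b') (pcross b a')) :
    collin P Q R := by
  have hg : g ≠ 0 := by rintro rfl; simp [pcross] at hgg'
  have hg' : g' ≠ 0 := by rintro rfl; simp [pcross] at hgg'
  obtain ⟨s, t, hcab⟩ := exists_eq_smul_add_smul_of_dotProduct_eq_zero hg hab ha hb hc
  obtain ⟨s', t', hc'a'b'⟩ := exists_eq_smul_add_smul_of_dotProduct_eq_zero hg' ha'b' ha' hb' hc'
  rw [collin, hP, hQ, hR]
  exact det_pappus_eq_zero hcab hc'a'b'

/-- **Pappus' theorem.** If `a, b, c` lie on a line `g` and `a', b', c'` on a line `g'`,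
with `g, g'` distinct and all six points distinct from `g ∩ g'` (and the points on each
line pairwise distinct), then `P = bc' ∩ cb'`, `Q = ac' ∩ ca'`, `R = ab' ∩ ba'` are
collinear. -/
theorem pappus (g g' a b c a' b' c' P Q R : PPt)
    (hgg' : pcross g g' ≠ 0)
    (ha : a ⬝ᵥ g = 0) (hb : b ⬝ᵥ g = 0) (hc : c ⬝ᵥ g = 0)
    (ha' : a' ⬝ᵥ g' = 0) (hb' : b' ⬝ᵥ g' = 0) (hc' : c' ⬝ᵥ g' = 0)
    (hane : a ⬝ᵥ g' ≠ 0) (hbne : b ⬝ᵥ g' ≠ 0) (hcne : c ⬝ᵥ g' ≠ 0)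
    (ha'ne : a' ⬝ᵥ g ≠ 0) (hb'ne : b' ⬝ᵥ g ≠ 0) (hc'ne : c' ⬝ᵥ g ≠ 0)
    (hab : pcross a b ≠ 0) (hac : pcross a c ≠ 0) (hbc : pcross b c ≠ 0)
    (ha'b' : pcross a' b' ≠ 0) (ha'c' : pcross a' c' ≠ 0) (hb'c' : pcross b' c' ≠ 0)
    (hP : P = pcross (pcross b c') (pcross c b'))
    (hQ : Q = pcross (pcross a c') (pcross c a'))
    (hR : R = pcross (pcross a b') (pcross b a'))
    (hP0 : P ≠ 0) (hQ0 : Q ≠ 0) (hR0 : R ≠ 0) :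
    collin P Q R :=
  pappus_general g g' a b c a' b' c' P Q R hgg' ha hb hc ha' hb' hc' hab ha'b' hP hQ hR
end
end

section
/- (Desargues) Two triangles ABC and A'B'C' in the projective plane are perspective from a point (the lines AA', BB', CC' are concurrent) if and only if they are perspective from a line (the points P = BC ∩ B'C', Q = AC ∩ A'C', R = AB ∩ A'B' are collinear). -/
/-!
The points `P`, `Q`, `R` satisfy the polynomial identity
`det (P, Q, R) = det (a, b, c) * det (a', b', c') * det (aa', bb', cc')`,
so, the two triangles being nondegenerate, `P`, `Q`, `R` are collinear iff the three lines
`aa'`, `bb'`, `cc'` are concurrent.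
-/

open Matrix

noncomputable section

lemma collin_iff_pcross_dotProduct (a b c : PPt) : collin a b c ↔ pcross a b ⬝ᵥ c = 0 := by
  rw [collin, dotProduct_comm, pcross, triple_product_permutation, triple_product_eq_det]
  rfl

lemma exists_ne_zero_collin_iff (a a' b b' c c' : PPt) :
    (∃ S : PPt, S ≠ 0 ∧ collin a a' S ∧ collin b b' S ∧ collin c c' S) ↔
      collin (pcross a a') (pcross b b') (pcross c c') := by
  have hmulVec : ∀ S : PPt, (collin a a' S ∧ collin b b' S ∧ collin c c' S) ↔
      Matrix.of ![pcross a a', pcross b b', pcross c c'] *ᵥ S = 0 := by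
    intro S
    simp only [collin_iff_pcross_dotProduct, funext_iff, Fin.forall_fin_succ, IsEmpty.forall_iff,
      and_true]
    rfl
  simp only [hmulVec]
  exact exists_mulVec_eq_zero_iff

lemma det_meets_eq (a b c a' b' c' : PPt) :
    det (of ![pcross (pcross b c) (pcross b' c'), pcross (pcross a c) (pcross a' c'),
        pcross (pcross a b) (pcross a' b')]) =
      det (of ![a, b, c]) * det (of ![a', b', c']) *
        det (of ![pcross a a', pcross b b', pcross c c']) := by
  simp only [pcross, cross_apply, det_fin_three, of_apply, cons_val_zero, cons_val_one,
    cons_val_two, head_cons, tail_cons]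
  ring

theorem desargues_general (a b c a' b' c' P Q R : PPt)
    (htri : ¬ collin a b c) (htri' : ¬ collin a' b' c')
    (hP : P = pcross (pcross b c) (pcross b' c'))
    (hQ : Q = pcross (pcross a c) (pcross a' c'))
    (hR : R = pcross (pcross a b) (pcross a' b')) :
    (∃ S : PPt, S ≠ 0 ∧ collin a a' S ∧ collin b b' S ∧ collin c c' S) ↔
      collin P Q R := by
  subst hP hQ hR
  rw [exists_ne_zero_collin_iff, collin, collin, det_meets_eq]
  exact (mul_eq_zero_iff_left (mul_ne_zero htri htri')).symm

/-- **Desargues' theorem.** Two triangles `abc` and `a'b'c'` (no common vertices, no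
common sides) are perspective from a point iff they are perspective from a line:
the lines `aa'`, `bb'`, `cc'` are concurrent iff the points `P = bc ∩ b'c'`,
`Q = ac ∩ a'c'`, `R = ab ∩ a'b'` are collinear. -/
theorem desargues (a b c a' b' c' P Q R : PPt)
    (htri : ¬ collin a b c) (htri' : ¬ collin a' b' c')
    (haa' : pcross a a' ≠ 0) (hbb' : pcross b b' ≠ 0) (hcc' : pcross c c' ≠ 0)
    (hP : P = pcross (pcross b c) (pcross b' c'))
    (hQ : Q = pcross (pcross a c) (pcross a' c'))
    (hR : R = pcross (pcross a b) (pcross a' b'))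
    (hP0 : P ≠ 0) (hQ0 : Q ≠ 0) (hR0 : R ≠ 0) :
    (∃ S : PPt, S ≠ 0 ∧ collin a a' S ∧ collin b b' S ∧ collin c c' S) ↔
      collin P Q R :=
  desargues_general a b c a' b' c' P Q R htri htri' hP hQ hR
end
end

section
/- Let ABCD be a quadrilateral, U ∈ BC, V ∈ AD, M = BV ∩ AC, N = AU ∩ BD, F = BC ∩ AD (intersection of the lines containing U and V respectively), and J = AU ∩ BV. Then the lines DM, CN, and FJ are concurrent. -/
open Matrix

noncomputable section

private lemma claim1 (A B C D : PPt) (δ ε : ℝ) :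
    D ⨯₃ ((B ⨯₃ (δ • A + ε • D)) ⨯₃ (A ⨯₃ C)) =
      (δ * Matrix.det (Matrix.of ![A, B, C]) + ε * Matrix.det (Matrix.of ![B, C, D])) • (A ⨯₃ D)
        + (ε * Matrix.det (Matrix.of ![A, B, D])) • (C ⨯₃ D) := by
  funext i
  fin_cases i <;>
    simp [cross_apply, det_fin_three, Pi.add_apply, Pi.smul_apply, smul_eq_mul] <;> ring

private lemma claim2 (A B C D : PPt) (β γ : ℝ) :
    C ⨯₃ ((A ⨯₃ (β • B + γ • C)) ⨯₃ (B ⨯₃ D)) =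
      (-(β * Matrix.det (Matrix.of ![A, B, D]) + γ * Matrix.det (Matrix.of ![A, C, D]))) • (B ⨯₃ C)
        + (γ * Matrix.det (Matrix.of ![A, B, C])) • (C ⨯₃ D) := by
  funext i
  fin_cases i <;>
    simp [cross_apply, det_fin_three, Pi.add_apply, Pi.smul_apply, smul_eq_mul] <;> ring

private lemma claim3 (A B C D : PPt) (β γ δ ε : ℝ) :
    ((B ⨯₃ C) ⨯₃ (A ⨯₃ D)) ⨯₃ ((A ⨯₃ (β • B + γ • C)) ⨯₃ (B ⨯₃ (δ • A + ε • D))) =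
      (ε * Matrix.det (Matrix.of ![B, C, D]) *
          (β * Matrix.det (Matrix.of ![A, B, D]) + γ * Matrix.det (Matrix.of ![A, C, D])))
        • (A ⨯₃ B)
      + (ε * Matrix.det (Matrix.of ![A, B, C]) *
          (β * Matrix.det (Matrix.of ![A, B, D]) + γ * Matrix.det (Matrix.of ![A, C, D])))
        • (B ⨯₃ D)
      + (γ * Matrix.det (Matrix.of ![A, B, C]) *
          (δ * Matrix.det (Matrix.of ![A, B, C]) + ε * Matrix.det (Matrix.of ![B, C, D])))
        • (A ⨯₃ D) := by
  funext i
  fin_cases i <;>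
    simp [cross_apply, det_fin_three, Pi.add_apply, Pi.smul_apply, smul_eq_mul] <;> ring

private lemma generic (A B C D : PPt) (x1 x2 y1 y2 z1 z2 z3 : ℝ) :
    Matrix.det (Matrix.of ![x1 • (A ⨯₃ D) + x2 • (C ⨯₃ D),
        y1 • (B ⨯₃ C) + y2 • (C ⨯₃ D),
        z1 • (A ⨯₃ B) + z2 • (B ⨯₃ D) + z3 • (A ⨯₃ D)]) =
      x1 * y1 * z1 * (Matrix.det (Matrix.of ![A, B, C]) * Matrix.det (Matrix.of ![A, B, D]))
      - x1 * y1 * z2 * (Matrix.det (Matrix.of ![A, B, D]) * Matrix.det (Matrix.of ![B, C, D]))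
      + x1 * y2 * z1 * (Matrix.det (Matrix.of ![A, B, D]) * Matrix.det (Matrix.of ![A, C, D]))
      - x2 * y1 * z1 * (Matrix.det (Matrix.of ![A, B, C]) * Matrix.det (Matrix.of ![B, C, D]))
      + x2 * y1 * z2 * (Matrix.det (Matrix.of ![B, C, D]) * Matrix.det (Matrix.of ![B, C, D]))
      + x2 * y1 * z3 * (Matrix.det (Matrix.of ![A, C, D]) * Matrix.det (Matrix.of ![B, C, D])) := by
  simp only [cross_apply, det_fin_three, Pi.add_apply, Pi.smul_apply, smul_eq_mul, of_apply,
    cons_val', cons_val_zero, cons_val_one, head_cons, empty_val', cons_val_fin_one,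
    head_fin_const, cons_val_two, tail_cons]
  ring

/-- The key determinant identity. -/
private lemma key (A B C D : PPt) (β γ δ ε : ℝ) :
    Matrix.det (Matrix.of ![
      D ⨯₃ ((B ⨯₃ (δ • A + ε • D)) ⨯₃ (A ⨯₃ C)),
      C ⨯₃ ((A ⨯₃ (β • B + γ • C)) ⨯₃ (B ⨯₃ D)),
      ((B ⨯₃ C) ⨯₃ (A ⨯₃ D)) ⨯₃ ((A ⨯₃ (β • B + γ • C)) ⨯₃ (B ⨯₃ (δ • A + ε • D)))]) = 0 := by
  rw [claim1, claim2, claim3, generic]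
  ring

private lemma dot_self_ne (x : PPt) (hx : x ≠ 0) : x ⬝ᵥ x ≠ 0 := by
  intro h
  exact hx ((dotProduct_self_eq_zero).mp h)

private lemma decomp (B C u : PPt) (hn : B ⨯₃ C ≠ 0)
    (h : Matrix.det (Matrix.of ![B, C, u]) = 0) : ∃ β γ : ℝ, u = β • B + γ • C := by
  have hnn : (B ⨯₃ C) ⬝ᵥ (B ⨯₃ C) ≠ 0 := dot_self_ne _ hn
  have h' : B 0 * C 1 * u 2 - B 0 * C 2 * u 1 - B 1 * C 0 * u 2 + B 1 * C 2 * u 0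
      + B 2 * C 0 * u 1 - B 2 * C 1 * u 0 = 0 := by
    rw [det_fin_three] at h; simpa using h
  have key0 : u 0 * ((B ⨯₃ C) ⬝ᵥ (B ⨯₃ C))
      = ((u ⨯₃ C) ⬝ᵥ (B ⨯₃ C)) * B 0 + ((B ⨯₃ u) ⬝ᵥ (B ⨯₃ C)) * C 0 := by
    simp only [cross_apply, dotProduct, Fin.sum_univ_three, cons_val_zero, cons_val_one,
      head_cons, cons_val_two, tail_cons]
    linear_combination (B 1 * C 2 - B 2 * C 1) * h'
  have key1 : u 1 * ((B ⨯₃ C) ⬝ᵥ (B ⨯₃ C))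
      = ((u ⨯₃ C) ⬝ᵥ (B ⨯₃ C)) * B 1 + ((B ⨯₃ u) ⬝ᵥ (B ⨯₃ C)) * C 1 := by
    simp only [cross_apply, dotProduct, Fin.sum_univ_three, cons_val_zero, cons_val_one,
      head_cons, cons_val_two, tail_cons]
    linear_combination (B 2 * C 0 - B 0 * C 2) * h'
  have key2 : u 2 * ((B ⨯₃ C) ⬝ᵥ (B ⨯₃ C))
      = ((u ⨯₃ C) ⬝ᵥ (B ⨯₃ C)) * B 2 + ((B ⨯₃ u) ⬝ᵥ (B ⨯₃ C)) * C 2 := by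
    simp only [cross_apply, dotProduct, Fin.sum_univ_three, cons_val_zero, cons_val_one,
      head_cons, cons_val_two, tail_cons]
    linear_combination (B 0 * C 1 - B 1 * C 0) * h'
  refine ⟨((u ⨯₃ C) ⬝ᵥ (B ⨯₃ C)) / ((B ⨯₃ C) ⬝ᵥ (B ⨯₃ C)),
          ((B ⨯₃ u) ⬝ᵥ (B ⨯₃ C)) / ((B ⨯₃ C) ⬝ᵥ (B ⨯₃ C)), ?_⟩
  have c0 : u 0 = ((u ⨯₃ C) ⬝ᵥ (B ⨯₃ C)) / ((B ⨯₃ C) ⬝ᵥ (B ⨯₃ C)) * B 0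
      + ((B ⨯₃ u) ⬝ᵥ (B ⨯₃ C)) / ((B ⨯₃ C) ⬝ᵥ (B ⨯₃ C)) * C 0 := by
    rw [div_mul_eq_mul_div, div_mul_eq_mul_div, ← add_div, eq_div_iff hnn]
    linear_combination key0
  have c1 : u 1 = ((u ⨯₃ C) ⬝ᵥ (B ⨯₃ C)) / ((B ⨯₃ C) ⬝ᵥ (B ⨯₃ C)) * B 1
      + ((B ⨯₃ u) ⬝ᵥ (B ⨯₃ C)) / ((B ⨯₃ C) ⬝ᵥ (B ⨯₃ C)) * C 1 := by
    rw [div_mul_eq_mul_div, div_mul_eq_mul_div, ← add_div, eq_div_iff hnn]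
    linear_combination key1
  have c2 : u 2 = ((u ⨯₃ C) ⬝ᵥ (B ⨯₃ C)) / ((B ⨯₃ C) ⬝ᵥ (B ⨯₃ C)) * B 2
      + ((B ⨯₃ u) ⬝ᵥ (B ⨯₃ C)) / ((B ⨯₃ C) ⬝ᵥ (B ⨯₃ C)) * C 2 := by
    rw [div_mul_eq_mul_div, div_mul_eq_mul_div, ← add_div, eq_div_iff hnn]
    linear_combination key2
  funext i
  fin_cases i
  · exact c0
  · exact c1
  · exact c2

private lemma cross_ne (B C A : PPt) (h : Matrix.det (Matrix.of ![A, B, C]) ≠ 0) :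
    B ⨯₃ C ≠ 0 := by
  intro hz
  apply h
  have := triple_product_eq_det A B C
  rw [hz] at this
  simp only [dotProduct_zero] at this
  exact this.symm

private lemma collin_iff_dot (x y P : PPt) : collin x y P ↔ P ⬝ᵥ (x ⨯₃ y) = 0 := by
  unfold collin
  rw [show Matrix.det (Matrix.of ![x, y, P]) = Matrix.det ![x, y, P] from rfl,
    ← triple_product_eq_det, triple_product_permutation, triple_product_permutation]

private lemma exists_common_point (l1 l2 l3 : PPt) (h1 : l1 ≠ 0)
    (hd : Matrix.det (Matrix.of ![l1, l2, l3]) = 0) :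
    ∃ P : PPt, P ≠ 0 ∧ P ⬝ᵥ l1 = 0 ∧ P ⬝ᵥ l2 = 0 ∧ P ⬝ᵥ l3 = 0 := by
  have hd' : l1 ⬝ᵥ (l2 ⨯₃ l3) = 0 := by
    rw [triple_product_eq_det]; exact hd
  by_cases h12 : l1 ⨯₃ l2 ≠ 0
  · refine ⟨l1 ⨯₃ l2, h12, ?_, ?_, ?_⟩
    · rw [dotProduct_comm]; exact dot_self_cross l1 l2
    · rw [dotProduct_comm]; exact dot_cross_self l1 l2
    · rw [dotProduct_comm, triple_product_permutation]; exact hd'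
  push_neg at h12
  by_cases h13 : l1 ⨯₃ l3 ≠ 0
  · refine ⟨l1 ⨯₃ l3, h13, ?_, ?_, ?_⟩
    · rw [dotProduct_comm]; exact dot_self_cross l1 l3
    · rw [dotProduct_comm, triple_product_permutation, ← cross_anticomm, dotProduct_neg,
        hd', neg_zero]
    · rw [dotProduct_comm]; exact dot_cross_self l1 l3
  push_neg at h13
  have hw : ∃ w : PPt, l1 ⨯₃ w ≠ 0 := by
    by_contra hc
    push_neg at hc
    apply h1
    have e0 := hc ![(1:ℝ), 0, 0]
    have e1 := hc ![(0:ℝ), 1, 0]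
    have k0 : l1 0 = 0 := by simpa [cross_apply] using congrFun e1 2
    have k2 : l1 2 = 0 := by simpa [cross_apply] using congrFun e0 1
    have k1 : l1 1 = 0 := by
      have := congrFun e0 2
      simp [cross_apply] at this
      simpa using this
    funext i
    fin_cases i
    · exact k0
    · exact k1
    · exact k2
  obtain ⟨w, hw⟩ := hw
  refine ⟨l1 ⨯₃ w, hw, ?_, ?_, ?_⟩
  · rw [dotProduct_comm]; exact dot_self_cross l1 w
  · rw [dotProduct_comm, triple_product_permutation, triple_product_permutation,
      ← cross_anticomm, dotProduct_neg, h12, dotProduct_zero, neg_zero]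
  · rw [dotProduct_comm, triple_product_permutation, triple_product_permutation,
      ← cross_anticomm, dotProduct_neg, h13, dotProduct_zero, neg_zero]

/-- Let `A B C D` be four points, no three collinear, `u ∈ BC`, `v ∈ AD`,
`M = Bv ∩ AC`, `N = Au ∩ BD`, `F = BC ∩ AD`, `J = Au ∩ Bv`.
Then the lines `DM`, `CN` and `FJ` are concurrent. -/
theorem sharygin_concurrent (A B C D u v M N F J : PPt)
    (hABC : ¬ collin A B C) (hABD : ¬ collin A B D)
    (hACD : ¬ collin A C D) (hBCD : ¬ collin B C D)
    (hu0 : u ≠ 0) (hu : collin B C u)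
    (hv0 : v ≠ 0) (hv : collin A D v)
    (hM : M = pcross (pcross B v) (pcross A C))
    (hN : N = pcross (pcross A u) (pcross B D))
    (hF : F = pcross (pcross B C) (pcross A D))
    (hJ : J = pcross (pcross A u) (pcross B v))
    (hM0 : M ≠ 0) (hN0 : N ≠ 0) (hF0 : F ≠ 0) (hJ0 : J ≠ 0)
    (hDM : pcross D M ≠ 0) (hCN : pcross C N ≠ 0) (hFJ : pcross F J ≠ 0) :
    ∃ P : PPt, P ≠ 0 ∧ collin D M P ∧ collin C N P ∧ collin F J P := by
  -- decompose u and v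
  have hBC : B ⨯₃ C ≠ 0 := cross_ne B C A hABC
  have hAD : A ⨯₃ D ≠ 0 := by
    apply cross_ne A D B
    intro hz
    apply hABD
    unfold collin at *
    rw [det_fin_three] at hz ⊢
    simp only [of_apply, cons_val', cons_val_zero, cons_val_one, head_cons, empty_val',
      cons_val_fin_one, head_fin_const, cons_val_two, tail_cons] at hz ⊢
    linear_combination -hz
  obtain ⟨β, γ, huv⟩ := decomp B C u hBC hu
  obtain ⟨δ, ε, hvv⟩ := decomp A D v hAD hv
  -- the determinant of the three lines vanishes
  have hdet : Matrix.det (Matrix.of ![pcross D M, pcross C N, pcross F J]) = 0 := by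
    rw [hM, hN, hF, hJ, huv, hvv]
    show Matrix.det (Matrix.of ![
      D ⨯₃ ((B ⨯₃ (δ • A + ε • D)) ⨯₃ (A ⨯₃ C)),
      C ⨯₃ ((A ⨯₃ (β • B + γ • C)) ⨯₃ (B ⨯₃ D)),
      ((B ⨯₃ C) ⨯₃ (A ⨯₃ D)) ⨯₃ ((A ⨯₃ (β • B + γ • C)) ⨯₃ (B ⨯₃ (δ • A + ε • D)))]) = 0
    exact key A B C D β γ δ ε
  obtain ⟨P, hP0, h1, h2, h3⟩ := exists_common_point (pcross D M) (pcross C N) (pcross F J)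
    hDM hdet
  exact ⟨P, hP0, (collin_iff_dot D M P).mpr h1, (collin_iff_dot C N P).mpr h2,
    (collin_iff_dot F J P).mpr h3⟩
end
end

section
/- (Generalized Sharygin, part 2) Let A₁A₂A₃A₄ be a complete quadrangle, {i,j,k,s} = {1,2,3,4}, U_js ∈ A_jA_s, U_ik ∈ A_iA_k. Set I = A_iA_k ∩ A_jA_s, M = A_iU_js ∩ A_jA_k, N = A_jU_ik ∩ A_iA_s, and J = A_iM ∩ A_jN. Then the lines A_sM, A_kN, and IJ are concurrent. -/
open Matrix

noncomputable section

/-! No three vertices are collinear, so `u₁ = x A_j + y A_s` and `u₂ = z A_i + w A_k`. With the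
brackets `p = [A_iA_jA_k]`, `q = [A_iA_jA_s]`, `r = [A_iA_kA_s]`, `t = [A_jA_kA_s]`, the vector triple
product gives `M = (xp - yr) A_j + yq A_k`, `N = (wt - zq) A_i - wp A_s`, `I = r A_j + p A_s` and
`J = w(xp - yr) A_j + yq u₂`. Three lines share a point iff their determinant vanishes, and here it is
`[A_kNJ][A_sMI] - [A_kNI][A_sMJ] = (xzwp²q)(yqrt) - (wprt)(xyzpq²) = 0`. -/

section CrossProduct

variable {R : Type*} [CommRing R]

theorem exists_ne_zero_dotProduct_eq_zero_of_det_eq_zero [IsDomain R]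
    {l₁ l₂ l₃ : Fin 3 → R} (h : det ![l₁, l₂, l₃] = 0) :
    ∃ P ≠ 0, l₁ ⬝ᵥ P = 0 ∧ l₂ ⬝ᵥ P = 0 ∧ l₃ ⬝ᵥ P = 0 := by
  obtain ⟨P, hP, hlP⟩ := exists_mulVec_eq_zero_iff.mpr h
  exact ⟨P, hP, congrFun hlP 0, congrFun hlP 1, congrFun hlP 2⟩

theorem exists_eq_smul_add_smul_of_det_eq_zero {F : Type*} [Field F] {a b c : Fin 3 → F}
    (hab : a ⨯₃ b ≠ 0) (h : det ![a, b, c] = 0) : ∃ x y : F, c = x • a + y • b := by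
  obtain ⟨v, hv, hva⟩ := exists_vecMul_eq_zero_iff.mpr h
  have hrel : v 0 • a + v 1 • b + v 2 • c = 0 := by
    rw [← hva]
    ext m
    simp [vecMul, dotProduct, Fin.sum_univ_three]
  have hv₂ : v 2 ≠ 0 := by
    intro hv₂
    have hli : LinearIndependent F ![a, b] := crossProduct_ne_zero_iff_linearIndependent.mp hab
    obtain ⟨hv₀, hv₁⟩ := LinearIndependent.pair_iff.mp hli (v 0) (v 1) (by simpa [hv₂] using hrel)
    exact hv (by ext m; fin_cases m <;> simp [hv₀, hv₁, hv₂])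
  refine ⟨-(v 0 / v 2), -(v 1 / v 2), ?_⟩
  ext m
  have hrel_m := congrFun hrel m
  simp only [Pi.add_apply, Pi.smul_apply, smul_eq_mul, Pi.zero_apply] at hrel_m ⊢
  field_simp
  linear_combination hrel_m

theorem cross_apply_zero (u v : Fin 3 → R) : (u ⨯₃ v) 0 = u 1 * v 2 - u 2 * v 1 := rfl

theorem cross_apply_one (u v : Fin 3 → R) : (u ⨯₃ v) 1 = u 2 * v 0 - u 0 * v 2 := rfl

theorem cross_apply_two (u v : Fin 3 → R) : (u ⨯₃ v) 2 = u 0 * v 1 - u 1 * v 0 := rfl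

theorem det_cross_cross_cross (a b c d e f : Fin 3 → R) :
    det ![a ⨯₃ b, c ⨯₃ d, e ⨯₃ f] =
      (c ⨯₃ d ⬝ᵥ f) * (a ⨯₃ b ⬝ᵥ e) - (e ⬝ᵥ c ⨯₃ d) * (a ⨯₃ b ⬝ᵥ f) := by
  rw [← triple_product_eq_det, cross_cross_eq_smul_sub_smul', dotProduct_sub, dotProduct_smul,
    dotProduct_smul, smul_eq_mul, smul_eq_mul]

theorem det_sharygin_lines_eq_zero {a b c d I M N J : Fin 3 → R} {x y z w : R}
    (hI : I = (a ⨯₃ c) ⨯₃ (b ⨯₃ d))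
    (hM : M = (a ⨯₃ (x • b + y • d)) ⨯₃ (b ⨯₃ c))
    (hN : N = (b ⨯₃ (z • a + w • c)) ⨯₃ (a ⨯₃ d))
    (hJ : J = (a ⨯₃ (x • b + y • d)) ⨯₃ (b ⨯₃ (z • a + w • c))) :
    det ![d ⨯₃ M, c ⨯₃ N, I ⨯₃ J] = 0 := by
  set p := a ⬝ᵥ b ⨯₃ c with hp
  set q := a ⬝ᵥ b ⨯₃ d with hq
  set r := a ⬝ᵥ c ⨯₃ d with hr
  set t := b ⬝ᵥ c ⨯₃ d with ht
  have hNJ : c ⨯₃ N ⬝ᵥ J = -(x * z * w * p ^ 2 * q) := by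
    simp only [hN, hJ, hp, hq, dotProduct, Fin.sum_univ_three, cross_apply_zero, cross_apply_one,
      cross_apply_two, Pi.add_apply, Pi.smul_apply, smul_eq_mul]
    ring
  have hMI : d ⨯₃ M ⬝ᵥ I = -(y * q * r * t) := by
    simp only [hM, hI, hq, hr, ht, dotProduct, Fin.sum_univ_three, cross_apply_zero,
      cross_apply_one, cross_apply_two, Pi.add_apply, Pi.smul_apply, smul_eq_mul]
    ring
  have hNI : I ⬝ᵥ c ⨯₃ N = -(w * p * r * t) := by
    simp only [hN, hI, hp, hr, ht, dotProduct, Fin.sum_univ_three, cross_apply_zero,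
      cross_apply_one, cross_apply_two, Pi.add_apply, Pi.smul_apply, smul_eq_mul]
    ring
  have hMJ : d ⨯₃ M ⬝ᵥ J = -(x * y * z * p * q ^ 2) := by
    simp only [hM, hJ, hp, hq, dotProduct, Fin.sum_univ_three, cross_apply_zero,
      cross_apply_one, cross_apply_two, Pi.add_apply, Pi.smul_apply, smul_eq_mul]
    ring
  rw [det_cross_cross_cross, hNJ, hMI, hNI, hMJ]
  ring

end CrossProduct

theorem collin_iff_cross_dotProduct {a b c : PPt} : collin a b c ↔ a ⨯₃ b ⬝ᵥ c = 0 := by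
  change det ![a, b, c] = 0 ↔ _
  rw [← triple_product_eq_det, triple_product_permutation, triple_product_permutation,
    dotProduct_comm]

theorem cross_ne_zero_of_not_collin {a b c : PPt} (h : ¬ collin a b c) : a ⨯₃ b ≠ 0 := by
  intro hab
  exact h (collin_iff_cross_dotProduct.mpr (by rw [hab, zero_dotProduct]))

theorem generalized_sharygin_part2_general (A : Fin 4 → PPt) (i j k s : Fin 4)
    (hij : i ≠ j) (hik : i ≠ k) (his : i ≠ s) (hjk : j ≠ k) (hjs : j ≠ s)
    (hnc : ∀ p q r : Fin 4, p ≠ q → p ≠ r → q ≠ r → ¬ collin (A p) (A q) (A r))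
    (u₁ u₂ I M N J : PPt)
    (hu₁ : collin (A j) (A s) u₁)
    (hu₂ : collin (A i) (A k) u₂)
    (hI : I = pcross (pcross (A i) (A k)) (pcross (A j) (A s)))
    (hM : M = pcross (pcross (A i) u₁) (pcross (A j) (A k)))
    (hN : N = pcross (pcross (A j) u₂) (pcross (A i) (A s)))
    (hJ : J = pcross (pcross (A i) u₁) (pcross (A j) u₂)) :
    ∃ P : PPt, P ≠ 0 ∧ collin (A s) M P ∧ collin (A k) N P ∧ collin I J P := by
  obtain ⟨x, y, rfl⟩ := exists_eq_smul_add_smul_of_det_eq_zero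
    (cross_ne_zero_of_not_collin (hnc j s i hjs hij.symm his.symm)) hu₁
  obtain ⟨z, w, rfl⟩ := exists_eq_smul_add_smul_of_det_eq_zero
    (cross_ne_zero_of_not_collin (hnc i k j hik hij hjk.symm)) hu₂
  obtain ⟨P, hP, hsM, hkN, hIJ⟩ := exists_ne_zero_dotProduct_eq_zero_of_det_eq_zero
    (det_sharygin_lines_eq_zero hI hM hN hJ)
  exact ⟨P, hP, collin_iff_cross_dotProduct.mpr hsM, collin_iff_cross_dotProduct.mpr hkN,
    collin_iff_cross_dotProduct.mpr hIJ⟩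

/-- **Generalized Sharygin's problem, part 2.** With the quadrangle `A`, a permutation
`i j k s` of the indices, `u₁ ∈ A_jA_s`, `u₂ ∈ A_iA_k`, `I = A_iA_k ∩ A_jA_s`,
`M = A_iu₁ ∩ A_jA_k`, `N = A_ju₂ ∩ A_iA_s` and `J = A_iM ∩ A_jN = A_iu₁ ∩ A_ju₂`,
the lines `A_sM`, `A_kN` and `IJ` are concurrent. -/
theorem generalized_sharygin_part2 (A : Fin 4 → PPt) (i j k s : Fin 4)
    (hij : i ≠ j) (hik : i ≠ k) (his : i ≠ s) (hjk : j ≠ k) (hjs : j ≠ s) (hks : k ≠ s)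
    (hnc : ∀ p q r : Fin 4, p ≠ q → p ≠ r → q ≠ r → ¬ collin (A p) (A q) (A r))
    (u₁ u₂ I M N J : PPt)
    (hu₁0 : u₁ ≠ 0) (hu₁ : collin (A j) (A s) u₁)
    (hu₂0 : u₂ ≠ 0) (hu₂ : collin (A i) (A k) u₂)
    (hI : I = pcross (pcross (A i) (A k)) (pcross (A j) (A s)))
    (hM : M = pcross (pcross (A i) u₁) (pcross (A j) (A k)))
    (hN : N = pcross (pcross (A j) u₂) (pcross (A i) (A s)))
    (hJ : J = pcross (pcross (A i) u₁) (pcross (A j) u₂))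
    (hI0 : I ≠ 0) (hM0 : M ≠ 0) (hN0 : N ≠ 0) (hJ0 : J ≠ 0)
    (hsM : pcross (A s) M ≠ 0) (hkN : pcross (A k) N ≠ 0) (hIJ : pcross I J ≠ 0) :
    ∃ P : PPt, P ≠ 0 ∧ collin (A s) M P ∧ collin (A k) N P ∧ collin I J P :=
  generalized_sharygin_part2_general A i j k s hij hik his hjk hjs hnc u₁ u₂ I M N J hu₁ hu₂ hI hM
    hN hJ
end
end

section
/- (Pascal's theorem, one direction) If six distinct points A, B', C, A', B, C' lie on a conic in the real projective plane, then the points P = AB' ∩ A'B, Q = B'C ∩ BC', and R = CA' ∩ C'A are collinear. -/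
/-!
The Veronese map `p ↦ (p₀², p₁², p₂², p₀p₁, p₀p₂, p₁p₂)` turns the equation of a conic into a
linear equation: a point lies on the conic with matrix `Q` iff its Veronese image is orthogonal to
the coefficient vector of the form. That vector is nonzero when `det Q ≠ 0` (a form vanishing
identically has a skew matrix, singular in odd dimension), so the Veronese images of six points of
the conic are linearly dependent and their `6 × 6` determinant vanishes. Expanding both sides, this
determinant is *equal* to the determinant of the three Pascal points `P, Q, R`.
-/

open Matrix

noncomputable section

/-- The point `p` lies on the conic defined by the quadratic form with matrix `Q`. -/
def OnConic (Q : Matrix (Fin 3) (Fin 3) ℝ) (p : PPt) : Prop := p ⬝ᵥ (Q *ᵥ p) = 0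

section Veronese

variable {R : Type*} [CommRing R]

def veronese (p : Fin 3 → R) : Fin 6 → R :=
  ![p 0 ^ 2, p 1 ^ 2, p 2 ^ 2, p 0 * p 1, p 0 * p 2, p 1 * p 2]

def quadCoeffs (Q : Matrix (Fin 3) (Fin 3) R) : Fin 6 → R :=
  ![Q 0 0, Q 1 1, Q 2 2, Q 0 1 + Q 1 0, Q 0 2 + Q 2 0, Q 1 2 + Q 2 1]

theorem veronese_dotProduct_quadCoeffs (Q : Matrix (Fin 3) (Fin 3) R) (p : Fin 3 → R) :
    veronese p ⬝ᵥ quadCoeffs Q = p ⬝ᵥ (Q *ᵥ p) := by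
  simp only [veronese, quadCoeffs, dotProduct, mulVec, Fin.sum_univ_succ, Finset.univ_unique,
    Finset.sum_singleton, Fin.default_eq_zero, Fin.succ_zero_eq_one, Fin.succ_one_eq_two,
    cons_val_zero, cons_val_succ, cons_val_fin_one]
  ring

theorem transpose_eq_neg_of_quadCoeffs_eq_zero {Q : Matrix (Fin 3) (Fin 3) R}
    (h : quadCoeffs Q = 0) : Qᵀ = -Q := by
  have hcoeff := fun i => congrFun h i
  simp only [quadCoeffs, Pi.zero_apply, Fin.forall_fin_succ, cons_val_zero, cons_val_succ,
    cons_val_fin_one, forall_const] at hcoeff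
  ext i j
  simp only [transpose_apply, Matrix.neg_apply]
  fin_cases i <;> fin_cases j <;> grind

end Veronese

section Field

variable {K : Type*} [Field K]

theorem det_eq_zero_of_quadCoeffs_eq_zero [NeZero (2 : K)] {Q : Matrix (Fin 3) (Fin 3) K}
    (h : quadCoeffs Q = 0) : Q.det = 0 := by
  have hneg := congrArg det (transpose_eq_neg_of_quadCoeffs_eq_zero h)
  rw [det_transpose, det_neg, Fintype.card_fin] at hneg
  have htwo : (2 : K) * Q.det = 0 := by linear_combination hneg
  exact (mul_eq_zero.1 htwo).resolve_left two_ne_zero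

theorem det_veronese_eq_zero [NeZero (2 : K)] {Q : Matrix (Fin 3) (Fin 3) K} (hQ : Q.det ≠ 0)
    (p : Fin 6 → Fin 3 → K) (hp : ∀ i, p i ⬝ᵥ (Q *ᵥ p i) = 0) :
    (of fun i => veronese (p i)).det = 0 := by
  rw [← exists_mulVec_eq_zero_iff]
  exact ⟨quadCoeffs Q, mt det_eq_zero_of_quadCoeffs_eq_zero hQ,
    funext fun i => (veronese_dotProduct_quadCoeffs Q (p i)).trans (hp i)⟩

end Field

theorem det_pascalPoints_eq_det_veronese (a b' c a' b c' : PPt) :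
    det (of ![pcross (pcross a b') (pcross a' b), pcross (pcross b' c) (pcross b c'),
      pcross (pcross c a') (pcross c' a)]) =
    det (of ![veronese a, veronese b', veronese c, veronese a', veronese b, veronese c']) := by
  simp only [pcross, cross_apply, veronese, det_succ_row_zero, det_unique, of_apply, cons_val',
    cons_val_zero, cons_val_one, cons_val, cons_val_succ, cons_val_fin_one, submatrix_apply,
    submatrix_submatrix, Function.comp_apply, Fin.succAbove, Fin.sum_univ_succ, Finset.univ_unique,
    Finset.sum_singleton, Fin.default_eq_zero, Fin.succ_zero_eq_one, Fin.succ_one_eq_two,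
    Fin.castSucc_zero, Fin.castSucc_one, Fin.castSucc_succ, Fin.val_succ, Fin.val_eq_zero,
    Fin.succ_pos, Fin.lt_one_iff, Fin.reduceLT, Fin.reduceEq, Fin.reduceSucc, Fin.reduceCastSucc,
    not_lt_zero, lt_self_iff_false, ↓reduceIte, Fin.coe_ofNat_eq_mod, Nat.zero_mod]
  ring

theorem pascal_general (Qm : Matrix (Fin 3) (Fin 3) ℝ)
    (hdet : Qm.det ≠ 0)
    (a b' c a' b c' P Q R : PPt)
    (ha : OnConic Qm a) (hb' : OnConic Qm b') (hc : OnConic Qm c)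
    (ha' : OnConic Qm a') (hb : OnConic Qm b) (hc' : OnConic Qm c')
    (hP : P = pcross (pcross a b') (pcross a' b))
    (hQ : Q = pcross (pcross b' c) (pcross b c'))
    (hR : R = pcross (pcross c a') (pcross c' a)) :
    collin P Q R := by
  subst hP hQ hR
  rw [collin, det_pascalPoints_eq_det_veronese]
  have hrows : ![veronese a, veronese b', veronese c, veronese a', veronese b, veronese c'] =
      fun i => veronese (![a, b', c, a', b, c'] i) := by
    ext i : 1; fin_cases i <;> rfl
  rw [hrows]
  refine det_veronese_eq_zero hdet _ fun i => ?_
  fin_cases i <;> assumption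

/-- **Pascal's theorem (one direction).** If six pairwise distinct points
`a, b', c, a', b, c'` lie on a conic, then the points `P = ab' ∩ a'b`,
`Q = b'c ∩ bc'` and `R = ca' ∩ c'a` are collinear. -/
theorem pascal (Qm : Matrix (Fin 3) (Fin 3) ℝ)
    (hsymm : Qm.IsSymm) (hdet : Qm.det ≠ 0)
    (a b' c a' b c' P Q R : PPt)
    (ha : OnConic Qm a) (hb' : OnConic Qm b') (hc : OnConic Qm c)
    (ha' : OnConic Qm a') (hb : OnConic Qm b) (hc' : OnConic Qm c')
    (hdist : List.Pairwise (fun x y => pcross x y ≠ 0) [a, b', c, a', b, c'])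
    (hP : P = pcross (pcross a b') (pcross a' b))
    (hQ : Q = pcross (pcross b' c) (pcross b c'))
    (hR : R = pcross (pcross c a') (pcross c' a))
    (hP0 : P ≠ 0) (hQ0 : Q ≠ 0) (hR0 : R ≠ 0) :
    collin P Q R :=
  pascal_general Qm hdet a b' c a' b c' P Q R ha hb' hc ha' hb hc' hP hQ hR
end
end

section
/- (Self-polar diagonal triangle) Let P, Q, R, S be four distinct points on a nondegenerate conic k in the real projective plane, no three collinear. Let A = QR ∩ PS, B = RP ∩ QS, C = PQ ∩ RS be the diagonal points. Then the polar line of A with respect to k is the line BC (and likewise the polar of B is CA and the polar of C is AB). -/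
open Matrix

noncomputable section

/-! Write `s = α p + β q + γ r` in the basis `p, q, r`; no three of the points being collinear
makes `α, β, γ` nonzero. Up to the common factor `-[p q r]` the diagonal points are
`a = β q + γ r`, `b = γ r + α p`, `c = α p + β q`, and because `p, q, r` lie on the conic,
`2 B(b, a) = B(s, s) = 0` for `B(x, y) = x ⬝ Q y`: the diagonal points are pairwise conjugate.
Hence `Q a` annihilates `b` and `c`, so it is a multiple of `b × c`, and the multiple is nonzero
because `Q` is invertible. -/

section CrossProduct

variable {K : Type*} [Field K]

theorem exists_eq_smul_add_smul_add_smul {p q r : Fin 3 → K} (h : p ⬝ᵥ q ⨯₃ r ≠ 0)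
    (s : Fin 3 → K) : ∃ α β γ : K, s = α • p + β • q + γ • r := by
  set M : Matrix (Fin 3) (Fin 3) K := Matrix.of ![p, q, r]
  have hM : IsUnit M.det := isUnit_iff_ne_zero.2 (by rwa [triple_product_eq_det] at h)
  refine ⟨(s ᵥ* M⁻¹) 0, (s ᵥ* M⁻¹) 1, (s ᵥ* M⁻¹) 2, ?_⟩
  conv_lhs => rw [← vecMul_one s, ← nonsing_inv_mul M hM, ← vecMul_vecMul]
  rw [vecMul_eq_sum, Fin.sum_univ_three]
  rfl

theorem dot_cross_smul_add_smul (u v : Fin 3 → K) (β γ : K) :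
    u ⬝ᵥ v ⨯₃ (β • u + γ • v) = 0 := by
  simp [cross_self, dot_cross_self]

theorem smul_add_smul_ne_zero {u v w : Fin 3 → K} (h : u ⬝ᵥ v ⨯₃ w ≠ 0) {β : K} (hβ : β ≠ 0)
    (γ : K) : β • u + γ • v ≠ 0 := by
  intro h0
  have := congrArg (· ⬝ᵥ v ⨯₃ w) h0
  simp [dot_self_cross, h, hβ] at this

theorem exists_eq_smul_of_cross_eq_zero {u n : Fin 3 → K} (hn : n ≠ 0) (h : n ⨯₃ u = 0) :
    ∃ t : K, u = t • n := by
  have := mt crossProduct_ne_zero_iff_linearIndependent.2 (not_not.2 h)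
  simpa [LinearIndependent.pair_iff' hn, eq_comm] using this

theorem exists_mulVec_eq_smul_cross {Q : Matrix (Fin 3) (Fin 3) K} (hQ : Q.det ≠ 0)
    {a b c : Fin 3 → K} (ha : a ≠ 0) (hab : b ⬝ᵥ Q *ᵥ a = 0) (hac : c ⬝ᵥ Q *ᵥ a = 0)
    (hbc : b ⨯₃ c ≠ 0) : ∃ t : K, t ≠ 0 ∧ Q *ᵥ a = t • b ⨯₃ c := by
  obtain ⟨t, ht⟩ := exists_eq_smul_of_cross_eq_zero hbc (by
    rw [cross_cross_eq_smul_sub_smul, hab, hac, zero_smul, zero_smul, sub_zero])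
  refine ⟨t, ?_, ht⟩
  rintro rfl
  exact hQ (exists_mulVec_eq_zero_iff.1 ⟨a, ha, by rw [ht, zero_smul]⟩)

theorem diagonal_point_eq_smul {p q r s : Fin 3 → K} {α β γ : K}
    (hs : s = α • p + β • q + γ • r) :
    q ⨯₃ r ⨯₃ (p ⨯₃ s) = -(p ⬝ᵥ q ⨯₃ r) • (β • q + γ • r) := by
  rw [cross_cross_eq_smul_sub_smul', hs]
  simp [dotProduct_comm (q ⨯₃ r), dot_self_cross, dot_cross_self]
  module

end CrossProduct

theorem Matrix.IsSymm.dotProduct_mulVec_comm {R n : Type*} [CommSemiring R] [Fintype n]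
    {Q : Matrix n n R} (hQ : Q.IsSymm) (x y : n → R) : x ⬝ᵥ Q *ᵥ y = y ⬝ᵥ Q *ᵥ x := by
  rw [dotProduct_mulVec, ← mulVec_transpose, hQ.eq, dotProduct_comm]

theorem diagonal_points_conjugate {K n : Type*} [Field K] [NeZero (2 : K)] [Fintype n]
    {Q : Matrix n n K} (hQ : Q.IsSymm) {p q r s : n → K}
    (hp : p ⬝ᵥ Q *ᵥ p = 0) (hq : q ⬝ᵥ Q *ᵥ q = 0) (hr : r ⬝ᵥ Q *ᵥ r = 0)
    (hs : s ⬝ᵥ Q *ᵥ s = 0) {α β γ : K} (hs_eq : s = α • p + β • q + γ • r) :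
    (γ • r + α • p) ⬝ᵥ Q *ᵥ (β • q + γ • r) = 0 := by
  have h2 : 2 * ((γ • r + α • p) ⬝ᵥ Q *ᵥ (β • q + γ • r)) = s ⬝ᵥ Q *ᵥ s := by
    simp only [hs_eq, mulVec_add, mulVec_smul, dotProduct_add, add_dotProduct, dotProduct_smul,
      smul_dotProduct, smul_eq_mul, hp, hq, hr, hQ.dotProduct_mulVec_comm q p,
      hQ.dotProduct_mulVec_comm r p, hQ.dotProduct_mulVec_comm r q]
    ring
  exact (mul_eq_zero.1 (h2.trans hs)).resolve_left two_ne_zero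

theorem exists_mulVec_diagonal_point_eq_smul_cross {K : Type*} [Field K] [NeZero (2 : K)]
    {Q : Matrix (Fin 3) (Fin 3) K} (hQ : Q.IsSymm) (hQdet : Q.det ≠ 0) {p q r s : Fin 3 → K}
    (hp : p ⬝ᵥ Q *ᵥ p = 0) (hq : q ⬝ᵥ Q *ᵥ q = 0) (hr : r ⬝ᵥ Q *ᵥ r = 0)
    (hs : s ⬝ᵥ Q *ᵥ s = 0) (hpqr : p ⬝ᵥ q ⨯₃ r ≠ 0) {α β γ : K} (hα : α ≠ 0) (hβ : β ≠ 0)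
    (hs_eq : s = α • p + β • q + γ • r) :
    ∃ t : K, t ≠ 0 ∧
      Q *ᵥ (q ⨯₃ r ⨯₃ (p ⨯₃ s)) = t • (r ⨯₃ p ⨯₃ (q ⨯₃ s)) ⨯₃ (p ⨯₃ q ⨯₃ (r ⨯₃ s)) := by
  set D := p ⬝ᵥ q ⨯₃ r
  have hqrp : q ⬝ᵥ r ⨯₃ p = D := (triple_product_permutation p q r).symm
  have hrpq : r ⬝ᵥ p ⨯₃ q = D := (triple_product_permutation q r p).symm.trans hqrp
  have hs_qrp : s = β • q + γ • r + α • p := by rw [hs_eq]; abel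
  have hs_rpq : s = γ • r + α • p + β • q := by rw [hs_eq]; abel
  rw [diagonal_point_eq_smul hs_eq, diagonal_point_eq_smul hs_qrp,
    diagonal_point_eq_smul hs_rpq, hqrp, hrpq]
  have hba := diagonal_points_conjugate hQ hp hq hr hs hs_eq
  have hac := diagonal_points_conjugate hQ hr hp hq hs hs_rpq
  apply exists_mulVec_eq_smul_cross hQdet
  · exact smul_ne_zero (neg_ne_zero.2 hpqr) (smul_add_smul_ne_zero (hqrp ▸ hpqr) hβ γ)
  · rw [mulVec_smul, smul_dotProduct, dotProduct_smul, hba, smul_zero, smul_zero]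
  · rw [mulVec_smul, smul_dotProduct, dotProduct_smul, hQ.dotProduct_mulVec_comm, hac,
      smul_zero, smul_zero]
  · intro h
    have := congrArg (r ⬝ᵥ ·) h
    simp [cross_self, dot_self_cross, hrpq, hpqr, hα, hβ] at this

theorem collin_iff_dotProduct_cross (a b c : PPt) : collin a b c ↔ a ⬝ᵥ b ⨯₃ c = 0 := by
  rw [triple_product_eq_det]
  rfl

/-- **Self-polar diagonal triangle.** If `p, q, r, s` are four points on a
nondegenerate conic, no three collinear, and `a = qr ∩ ps`, `b = rp ∩ qs`,
`c = pq ∩ rs` are the diagonal points of the quadrangle, then the polar of `a`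
is the line `bc`, the polar of `b` is `ca`, and the polar of `c` is `ab`. -/
theorem diagonal_triangle_self_polar (Qm : Matrix (Fin 3) (Fin 3) ℝ)
    (hsymm : Qm.IsSymm) (hdet : Qm.det ≠ 0)
    (p q r s a b c : PPt)
    (hp : OnConic Qm p) (hq : OnConic Qm q) (hr : OnConic Qm r) (hs : OnConic Qm s)
    (hpqr : ¬ collin p q r) (hpqs : ¬ collin p q s)
    (hprs : ¬ collin p r s) (hqrs : ¬ collin q r s)
    (ha : a = pcross (pcross q r) (pcross p s))
    (hb : b = pcross (pcross r p) (pcross q s))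
    (hc : c = pcross (pcross p q) (pcross r s)) :
    (∃ t : ℝ, t ≠ 0 ∧ Qm *ᵥ a = t • pcross b c) ∧
    (∃ t : ℝ, t ≠ 0 ∧ Qm *ᵥ b = t • pcross c a) ∧
    (∃ t : ℝ, t ≠ 0 ∧ Qm *ᵥ c = t • pcross a b) := by
  simp only [collin_iff_dotProduct_cross] at hpqr hpqs hprs hqrs
  obtain ⟨α, β, γ, hs_eq⟩ := exists_eq_smul_add_smul_add_smul hpqr s
  have hα : α ≠ 0 := by
    rintro rfl
    rw [hs_eq, zero_smul, zero_add, dot_cross_smul_add_smul] at hqrs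
    exact hqrs rfl
  have hβ : β ≠ 0 := by
    rintro rfl
    rw [hs_eq, zero_smul, add_zero, dot_cross_smul_add_smul] at hprs
    exact hprs rfl
  have hγ : γ ≠ 0 := by
    rintro rfl
    rw [hs_eq, zero_smul, add_zero, dot_cross_smul_add_smul] at hpqs
    exact hpqs rfl
  have hqrp : q ⬝ᵥ r ⨯₃ p ≠ 0 := by rwa [← triple_product_permutation]
  have hrpq : r ⬝ᵥ p ⨯₃ q ≠ 0 := by rwa [← triple_product_permutation]
  subst ha hb hc
  exact ⟨exists_mulVec_diagonal_point_eq_smul_cross hsymm hdet hp hq hr hs hpqr hα hβ hs_eq,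
    exists_mulVec_diagonal_point_eq_smul_cross hsymm hdet hq hr hp hs hqrp hβ hγ
      (by rw [hs_eq]; abel),
    exists_mulVec_diagonal_point_eq_smul_cross hsymm hdet hr hp hq hs hrpq hγ hα
      (by rw [hs_eq]; abel)⟩
end
end

section
/- Let (A₁A₂A₃A₄, g) be a (q,l)-pair, and for each pair of indices p ≠ q let G_pq be the G-point on A_pA_q (the harmonic conjugate of U_pq = g ∩ A_pA_q with respect to A_p, A_q). Then for any three distinct indices i, j, s, the line G_ij G_js passes through the point U_is = g ∩ A_iA_s. -/
open Matrix

noncomputable section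

/-- No three of the four vertices are collinear (in particular all are nonzero). -/
def Nondeg4 (A : Fin 4 → PPt) : Prop :=
  ∀ p q r : Fin 4, p ≠ q → p ≠ r → q ≠ r → ¬ collin (A p) (A q) (A r)

/-- `(A, g)` is a (q,l)-pair: a complete quadrangle `A 0, A 1, A 2, A 3` (no three
vertices collinear) together with a line `g` not incident with any vertex and not
incident with any of the three diagonal points. -/
def QLPair (A : Fin 4 → PPt) (g : PPt) : Prop :=
  g ≠ 0 ∧ Nondeg4 A ∧ (∀ p : Fin 4, A p ⬝ᵥ g ≠ 0) ∧
    (pcross (pcross (A 0) (A 1)) (pcross (A 2) (A 3))) ⬝ᵥ g ≠ 0 ∧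
    (pcross (pcross (A 0) (A 2)) (pcross (A 1) (A 3))) ⬝ᵥ g ≠ 0 ∧
    (pcross (pcross (A 0) (A 3)) (pcross (A 1) (A 2))) ⬝ᵥ g ≠ 0

/-- `U A g p q` is the point `U_pq = g ∩ A_pA_q`. -/
def U (A : Fin 4 → PPt) (g : PPt) (p q : Fin 4) : PPt :=
  pcross (pcross (A p) (A q)) g

/-- `x` and `y` are harmonic conjugates with respect to `a` and `b`: writing
`x = α • a + β • b` and `y = γ • a + δ • b`, the cross-ratio `(a, b; x, y)` is `-1`,
i.e. `α * δ + β * γ = 0`. -/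
def HarmonicConj (a b x y : PPt) : Prop :=
  ∃ α β γ δ : ℝ, (α, β) ≠ (0, 0) ∧ (γ, δ) ≠ (0, 0) ∧
    x = α • a + β • b ∧ y = γ • a + δ • b ∧ α * δ + β * γ = 0

/-!
Write `a_p = A_p ⬝ᵥ g`. The vector triple product gives `U_pq = a_p A_q - a_q A_p`, so the
harmonic condition for `G_pq = α A_p + β A_q` reads `α a_p = β a_q`. In the basis
`A_i, A_j, A_s` the coordinate determinant of `G_ij, G_js, U_is` is `α α' a_i - β β' a_s`,
which these two relations force to vanish.
-/

lemma U_eq_neg_smul_add_smul (A : Fin 4 → PPt) (g : PPt) (p q : Fin 4) :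
    U A g p q = (-(A q ⬝ᵥ g)) • A p + (A p ⬝ᵥ g) • A q := by
  rw [U, pcross, pcross, cross_cross_eq_smul_sub_smul, neg_smul, neg_add_eq_sub]

lemma linearIndependent_pair_of_not_collin {a b c : PPt} (h : ¬ collin a b c) :
    LinearIndependent ℝ ![a, b] := by
  refine crossProduct_ne_zero_iff_linearIndependent.mp fun hab => h ?_
  change det ![a, b, c] = 0
  rw [← triple_product_eq_det, triple_product_permutation, triple_product_permutation, hab,
    dotProduct_zero]

lemma HarmonicConj.exists_eq_smul_add_smul {a b x : PPt} {γ δ : ℝ}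
    (hab : LinearIndependent ℝ ![a, b]) (h : HarmonicConj a b x (γ • a + δ • b)) :
    ∃ α β : ℝ, x = α • a + β • b ∧ α * δ + β * γ = 0 := by
  obtain ⟨α, β, γ', δ', -, -, hx, hy, hrel⟩ := h
  obtain ⟨rfl, rfl⟩ := hab.eq_of_pair hy
  exact ⟨α, β, hx, hrel⟩

lemma collin_smul_add_smul {a b c : PPt} {α β α' β' γ δ : ℝ}
    (h : α * α' * δ + β * β' * γ = 0) :
    collin (α • a + β • b) (α' • b + β' • c) (γ • a + δ • c) := by
  have hdet : det (of ![α • a + β • b, α' • b + β' • c, γ • a + δ • c]) =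
      (α * α' * δ + β * β' * γ) * det (of ![a, b, c]) := by
    simp only [det_fin_three, of_apply, cons_val', Pi.add_apply, Pi.smul_apply, smul_eq_mul,
      cons_val_fin_one, cons_val_zero, cons_val_one, cons_val]
    ring
  rw [collin, hdet, h, zero_mul]

/-- **Proposition 4.** For a (q,l)-pair `(A, g)` and distinct indices `i, j, s`, let
`G_ij` be the harmonic conjugate of `U_ij = g ∩ A_iA_j` with respect to `A_i, A_j`,
and `G_js` the harmonic conjugate of `U_js` with respect to `A_j, A_s`.  Then the
line `G_ij G_js` passes through the point `U_is = g ∩ A_iA_s`. -/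
theorem G_points_line_through_Uis (A : Fin 4 → PPt) (g : PPt) (i j s : Fin 4)
    (hij : i ≠ j) (his : i ≠ s) (hjs : j ≠ s)
    (hql : QLPair A g)
    (Gij Gjs : PPt)
    (hGij : HarmonicConj (A i) (A j) Gij (U A g i j))
    (hGjs : HarmonicConj (A j) (A s) Gjs (U A g j s)) :
    collin Gij Gjs (U A g i s) := by
  obtain ⟨-, hnd, -⟩ := hql
  obtain ⟨α, β, rfl, hαβ⟩ := HarmonicConj.exists_eq_smul_add_smul
    (linearIndependent_pair_of_not_collin (hnd i j s hij his hjs))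
    (U_eq_neg_smul_add_smul A g i j ▸ hGij)
  obtain ⟨α', β', rfl, hα'β'⟩ := HarmonicConj.exists_eq_smul_add_smul
    (linearIndependent_pair_of_not_collin (hnd j s i hjs hij.symm his.symm))
    (U_eq_neg_smul_add_smul A g j s ▸ hGjs)
  rw [U_eq_neg_smul_add_smul]
  exact collin_smul_add_smul (by linear_combination α' * hαβ + β * hα'β')
end
end

section
/- (Nine-point conic) Let (A₁A₂A₃A₄, g) be a (q,l)-pair. Let G_pq (for the six pairs p < q) be the harmonic conjugate of U_pq = g ∩ A_pA_q with respect to A_p, A_q, and let I = A₁A₃ ∩ A₂A₄, I' = A₁A₄ ∩ A₂A₃, Ī = A₁A₂ ∩ A₃A₄ be the three diagonal points of the quadrangle. Then the nine points G₁₂, G₁₃, G₁₄, G₂₃, G₂₄, G₃₄, I, I', Ī all lie on a single conic. -/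
open Matrix

noncomputable section

/-!
Let `m p` be the Cramer coefficients of the quadrangle, so that `∑ p, m p • A p = 0`, and
put `C p = m p • A p` and `ν p = C p ⬝ᵥ g`. Then `G_pq` is proportional to
`ν q • C p + ν p • C q`, and the diagonal point on the side `A_p A_q` is `± (C p + C q)`.
Because `∑ C p = 0` and `∑ ν p = 0`, the symmetric form on `ℝ⁴` with Gram matrix `2 ν p` on
the diagonal and `-(ν p + ν q)` off it descends along `x ↦ ∑ x p • C p` to a quadratic form
on `ℝ³`, whose value at `s • C p + t • C q` is `2 (s - t) (s ν p - t ν q)`. It therefore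
vanishes at all nine points. When `g` is the line at infinity the `G_pq` are the midpoints
of the sides, and this is the classical nine-point conic.
-/

namespace NinePointConic

theorem mul_conj_nonsing_inv_mul_transpose {n K : Type*} [Fintype n] [DecidableEq n] [CommRing K]
    (M G : Matrix n n K) (hM : IsUnit M.det) : M * (M⁻¹ * G * M⁻¹ᵀ) * Mᵀ = G := by
  calc M * (M⁻¹ * G * M⁻¹ᵀ) * Mᵀ = M * M⁻¹ * G * (M * M⁻¹)ᵀ := by
        simp only [transpose_mul, Matrix.mul_assoc]
    _ = G := by rw [mul_nonsing_inv M hM, transpose_one, Matrix.one_mul, Matrix.mul_one]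

theorem exists_isSymm_dotProduct_mulVec_eq {K : Type*} [Field K] {n : ℕ}
    (C : Fin (n + 1) → Fin n → K) (hC : ∑ p, C p = 0)
    (hdet : (of fun i => C i.castSucc).det ≠ 0)
    (G : Matrix (Fin (n + 1)) (Fin (n + 1)) K) (hG : G.IsSymm) (hrow : ∀ p, ∑ q, G p q = 0) :
    ∃ Q : Matrix (Fin n) (Fin n) K, Q.IsSymm ∧ ∀ p q, C p ⬝ᵥ (Q *ᵥ C q) = G p q := by
  set M : Matrix (Fin n) (Fin n) K := of fun i => C i.castSucc
  set G' := G.submatrix Fin.castSucc Fin.castSucc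
  have hG' : G'ᵀ = G' := (hG.submatrix _).eq
  set Q := M⁻¹ * G' * M⁻¹ᵀ
  have hMQM : M * Q * Mᵀ = G' :=
    mul_conj_nonsing_inv_mul_transpose M G' (isUnit_iff_ne_zero.mpr hdet)
  have hlast : C (Fin.last n) = -∑ i : Fin n, C i.castSucc := by
    rw [Fin.sum_univ_castSucc] at hC
    exact eq_neg_of_add_eq_zero_right hC
  have hcol (q) : ∑ p, G p q = 0 := by
    rw [← hrow q]
    exact Finset.sum_congr rfl fun p _ => hG.apply q p
  have hfirst (i j : Fin n) :
      C i.castSucc ⬝ᵥ (Q *ᵥ C j.castSucc) = G i.castSucc j.castSucc := by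
    have := congrFun (congrFun hMQM i) j
    rwa [mul_mul_apply, transpose_transpose] at this
  have hleft (i : Fin n) (q) : C i.castSucc ⬝ᵥ (Q *ᵥ C q) = G i.castSucc q := by
    induction q using Fin.lastCases with
    | cast j => exact hfirst i j
    | last =>
      have := hrow i.castSucc
      rw [Fin.sum_univ_castSucc] at this
      rw [hlast, mulVec_neg, dotProduct_neg, mulVec_sum, dotProduct_sum]
      simp only [hfirst]
      linear_combination -this
  refine ⟨Q, ?_, fun p q => ?_⟩
  · simp only [Q, IsSymm, transpose_mul, transpose_transpose, Matrix.mul_assoc, hG']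
  induction p using Fin.lastCases with
  | cast i => exact hleft i q
  | last =>
    have := hcol q
    rw [Fin.sum_univ_castSucc] at this
    rw [hlast, neg_dotProduct, sum_dotProduct]
    simp only [hleft]
    linear_combination -this

theorem exists_isSymm_quadForm_smul_add_smul_of_sum_eq_zero {K : Type*} [Field K]
    (C : Fin 4 → Fin 3 → K) (hC : ∑ p, C p = 0) (hdet : (of fun i : Fin 3 => C i.castSucc).det ≠ 0)
    (ν : Fin 4 → K) (hν : ∑ p, ν p = 0) :
    ∃ Q : Matrix (Fin 3) (Fin 3) K, Q.IsSymm ∧ ∀ p q, p ≠ q → ∀ s t : K,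
      (s • C p + t • C q) ⬝ᵥ (Q *ᵥ (s • C p + t • C q)) = 2 * (s - t) * (s * ν p - t * ν q) := by
  -- the row sums of this Gram matrix vanish only because there are exactly four points
  obtain ⟨Q, hQ, hgram⟩ := exists_isSymm_dotProduct_mulVec_eq C hC hdet
    (of fun p q => if p = q then 2 * ν p else -(ν p + ν q))
    (IsSymm.ext fun p q => by
      by_cases h : p = q
      · subst h; rfl
      · simp [h, Ne.symm h, add_comm])
    (fun p => by
      rw [Fin.sum_univ_four] at hν
      fin_cases p <;> simp [Fin.sum_univ_four] <;> linear_combination -hν)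
  refine ⟨Q, hQ, fun p q hpq s t => ?_⟩
  simp only [add_dotProduct, dotProduct_add, mulVec_add, mulVec_smul, smul_dotProduct,
    dotProduct_smul, hgram, of_apply, ↓reduceIte, if_neg hpq, if_neg hpq.symm, smul_eq_mul]
  ring

def cramerCoeff (A : Fin 4 → PPt) : Fin 4 → ℝ :=
  ![det (of ![A 1, A 2, A 3]), -det (of ![A 0, A 2, A 3]),
    det (of ![A 0, A 1, A 3]), -det (of ![A 0, A 1, A 2])]

theorem sum_cramerCoeff_smul (A : Fin 4 → PPt) : ∑ p, cramerCoeff A p • A p = 0 := by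
  ext i
  fin_cases i <;> simp [Fin.sum_univ_four, cramerCoeff, det_fin_three] <;> ring

theorem diagonalPoints_eq (A : Fin 4 → PPt) :
    pcross (pcross (A 0) (A 2)) (pcross (A 1) (A 3)) =
        -(cramerCoeff A 1 • A 1 + cramerCoeff A 3 • A 3) ∧
      pcross (pcross (A 0) (A 3)) (pcross (A 1) (A 2)) =
        cramerCoeff A 1 • A 1 + cramerCoeff A 2 • A 2 ∧
      pcross (pcross (A 0) (A 1)) (pcross (A 2) (A 3)) =
        cramerCoeff A 2 • A 2 + cramerCoeff A 3 • A 3 := by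
  refine ⟨?_, ?_, ?_⟩ <;> ext i <;> fin_cases i <;>
    simp [pcross, cross_apply, cramerCoeff, det_fin_three] <;> ring

theorem HarmonicConj.exists_eq_smul {a b x g : PPt} (hab : LinearIndependent ℝ ![a, b])
    (hb : b ⬝ᵥ g ≠ 0) (h : HarmonicConj a b x (pcross (pcross a b) g)) :
    ∃ c : ℝ, x = c • ((b ⬝ᵥ g) • a + (a ⬝ᵥ g) • b) := by
  obtain ⟨α, β, γ, δ, -, -, rfl, hU, hαβ⟩ := h
  obtain ⟨hγ, hδ⟩ : γ + b ⬝ᵥ g = 0 ∧ δ - a ⬝ᵥ g = 0 := by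
    refine LinearIndependent.pair_iff.mp hab _ _ ?_
    rw [show (γ + b ⬝ᵥ g) • a + (δ - a ⬝ᵥ g) • b =
        (γ • a + δ • b) - ((a ⬝ᵥ g) • b - (b ⬝ᵥ g) • a) by module, ← hU, pcross, pcross,
      cross_cross_eq_smul_sub_smul, sub_self]
  refine ⟨α / (b ⬝ᵥ g), ?_⟩
  have hβ : α / (b ⬝ᵥ g) * (a ⬝ᵥ g) = β := by
    field_simp
    linear_combination hαβ - α * hδ - β * hγ
  rw [smul_add, smul_smul, smul_smul, div_mul_cancel₀ _ hb, hβ]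

namespace Nondeg4

variable {A : Fin 4 → PPt}

theorem cramerCoeff_ne_zero (hA : Nondeg4 A) (p : Fin 4) : cramerCoeff A p ≠ 0 := by
  fin_cases p
  · exact hA 1 2 3 (by decide) (by decide) (by decide)
  · exact neg_ne_zero.mpr (hA 0 2 3 (by decide) (by decide) (by decide))
  · exact hA 0 1 3 (by decide) (by decide) (by decide)
  · exact neg_ne_zero.mpr (hA 0 1 2 (by decide) (by decide) (by decide))

theorem det_cramerCoeff_smul_ne_zero (hA : Nondeg4 A) :
    (of fun i : Fin 3 => cramerCoeff A i.castSucc • A i.castSucc).det ≠ 0 := by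
  have : (of fun i : Fin 3 => cramerCoeff A i.castSucc • A i.castSucc).det =
      cramerCoeff A 0 * cramerCoeff A 1 * cramerCoeff A 2 * det (of ![A 0, A 1, A 2]) := by
    simp [det_fin_three]
    ring
  rw [this]
  exact mul_ne_zero (mul_ne_zero (mul_ne_zero (cramerCoeff_ne_zero hA 0)
    (cramerCoeff_ne_zero hA 1)) (cramerCoeff_ne_zero hA 2))
    (hA 0 1 2 (by decide) (by decide) (by decide))

theorem linearIndependent_pair (hA : Nondeg4 A) {p q : Fin 4} (hpq : p ≠ q) :
    LinearIndependent ℝ ![A p, A q] := by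
  obtain ⟨r, hrp, hrq⟩ : ∃ r, r ≠ p ∧ r ≠ q := by revert p q; decide
  refine crossProduct_ne_zero_iff_linearIndependent.mp fun h0 =>
    hA p q r hpq hrp.symm hrq.symm ?_
  show det ![A p, A q, A r] = 0
  rw [← triple_product_eq_det, triple_product_permutation, triple_product_permutation, h0,
    dotProduct_zero]

theorem exists_isSymm_quadForm_smul_add_smul (hA : Nondeg4 A) (g : PPt) :
    ∃ Q : Matrix (Fin 3) (Fin 3) ℝ, Q.IsSymm ∧ ∀ p q, p ≠ q → ∀ s t : ℝ,
      (s • A p + t • A q) ⬝ᵥ (Q *ᵥ (s • A p + t • A q)) =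
        2 * (s / cramerCoeff A p - t / cramerCoeff A q) *
          (s * (A p ⬝ᵥ g) - t * (A q ⬝ᵥ g)) := by
  obtain ⟨Q, hQ, hside⟩ := exists_isSymm_quadForm_smul_add_smul_of_sum_eq_zero
    (fun p => cramerCoeff A p • A p) (sum_cramerCoeff_smul A) (det_cramerCoeff_smul_ne_zero hA)
    (fun p => cramerCoeff A p * (A p ⬝ᵥ g))
    (by simp only [← smul_eq_mul, ← smul_dotProduct, ← sum_dotProduct, sum_cramerCoeff_smul,
      zero_dotProduct])
  refine ⟨Q, hQ, fun p q hpq s t => ?_⟩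
  have hp := cramerCoeff_ne_zero hA p
  have hq := cramerCoeff_ne_zero hA q
  have := hside p q hpq (s / cramerCoeff A p) (t / cramerCoeff A q)
  rw [smul_smul, smul_smul, div_mul_cancel₀ _ hp, div_mul_cancel₀ _ hq] at this
  rw [this]
  field_simp

end Nondeg4

end NinePointConic

open NinePointConic

/-- **Theorem 7 (nine-point conic).** For a (q,l)-pair `(A, g)`, the six points
`G_pq` (the harmonic conjugates of `U_pq = g ∩ A_pA_q` with respect to `A_p, A_q`)
and the three diagonal points of the quadrangle lie on one conic. -/
theorem nine_point_conic (A : Fin 4 → PPt) (g : PPt)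
    (hql : QLPair A g)
    (G12 G13 G14 G23 G24 G34 I I' Ibar : PPt)
    (hG12 : HarmonicConj (A 0) (A 1) G12 (U A g 0 1))
    (hG13 : HarmonicConj (A 0) (A 2) G13 (U A g 0 2))
    (hG14 : HarmonicConj (A 0) (A 3) G14 (U A g 0 3))
    (hG23 : HarmonicConj (A 1) (A 2) G23 (U A g 1 2))
    (hG24 : HarmonicConj (A 1) (A 3) G24 (U A g 1 3))
    (hG34 : HarmonicConj (A 2) (A 3) G34 (U A g 2 3))
    (hI : I = pcross (pcross (A 0) (A 2)) (pcross (A 1) (A 3)))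
    (hI' : I' = pcross (pcross (A 0) (A 3)) (pcross (A 1) (A 2)))
    (hIbar : Ibar = pcross (pcross (A 0) (A 1)) (pcross (A 2) (A 3))) :
    ∃ Qm : Matrix (Fin 3) (Fin 3) ℝ, Qm ≠ 0 ∧ Qm.IsSymm ∧
      OnConic Qm G12 ∧ OnConic Qm G13 ∧ OnConic Qm G14 ∧
      OnConic Qm G23 ∧ OnConic Qm G24 ∧ OnConic Qm G34 ∧
      OnConic Qm I ∧ OnConic Qm I' ∧ OnConic Qm Ibar := by
  obtain ⟨-, hA, hAg, -, -, -⟩ := hql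
  obtain ⟨Q, hQ, hside⟩ := Nondeg4.exists_isSymm_quadForm_smul_add_smul hA g
  have hdiag (p q : Fin 4) (hpq : p ≠ q) :
      OnConic Q (cramerCoeff A p • A p + cramerCoeff A q • A q) := by
    rw [OnConic, hside p q hpq, div_self (Nondeg4.cramerCoeff_ne_zero hA p),
      div_self (Nondeg4.cramerCoeff_ne_zero hA q), sub_self, mul_zero, zero_mul]
  have hharm (p q : Fin 4) (X : PPt) (hpq : p ≠ q)
      (hX : HarmonicConj (A p) (A q) X (U A g p q)) : OnConic Q X := by
    obtain ⟨c, rfl⟩ := hX.exists_eq_smul (Nondeg4.linearIndependent_pair hA hpq) (hAg q)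
    rw [OnConic, smul_add, smul_smul, smul_smul, hside p q hpq]
    ring
  obtain ⟨hI₀, hI'₀, hIbar₀⟩ := diagonalPoints_eq A
  refine ⟨Q, fun h0 => ?_, hQ, hharm 0 1 _ (by decide) hG12, hharm 0 2 _ (by decide) hG13,
    hharm 0 3 _ (by decide) hG14, hharm 1 2 _ (by decide) hG23, hharm 1 3 _ (by decide) hG24,
    hharm 2 3 _ (by decide) hG34, ?_, hI' ▸ hI'₀ ▸ hdiag 1 2 (by decide),
    hIbar ▸ hIbar₀ ▸ hdiag 2 3 (by decide)⟩
  · have h := hside 0 1 (by decide) 1 0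
    rw [h0, zero_mulVec, dotProduct_zero] at h
    simp [Nondeg4.cramerCoeff_ne_zero hA 0, hAg 0] at h
  · rw [hI, hI₀, OnConic, neg_dotProduct, mulVec_neg, dotProduct_neg, neg_neg]
    exact hdiag 1 3 (by decide)
end
end

section
/- (Euclidean specialization) Let A₁A₂A₃A₄ be four points in ℝ², no three collinear, and let G_pq be the midpoint of the segment A_pA_q for each pair p ≠ q. Then the six midpoints G₁₂, G₁₃, G₁₄, G₂₃, G₂₄, G₃₄ and the three diagonal points I = A₁A₃ ∩ A₂A₄, I' = A₁A₄ ∩ A₂A₃, Ī = A₁A₂ ∩ A₃A₄ (when they exist) lie on a common conic, and the three lines G₁₂G₃₄, G₁₃G₂₄, G₁₄G₂₃ are concurrent at the centroid of the four points. -/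
/-!
Let `Q₁ = A₁A₃ · A₂A₄` and `Q₂ = A₁A₄ · A₂A₃` be two line pairs through the four points and let
`C` be the conic `det (∇Q₁, ∇Q₂) = 0`, the locus of centres of the pencil `λ Q₁ + μ Q₂`.
For a quadratic polynomial `Q(A) - Q(B) = ∇Q((A + B)/2) · (A - B)`, so at the midpoint of two
common zeros `A ≠ B` both gradients are orthogonal to `A - B`, hence parallel: `C` contains the
six midpoints. Both factors of `Q₁` vanish at `I`, so `∇Q₁(I) = 0`; likewise `∇Q₂(I') = 0`; and
the Grassmann–Plücker relation `Q₁ - Q₂ = A₁A₂ · A₃A₄` gives `∇Q₁(Ī) = ∇Q₂(Ī)`. At `A₁` the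
determinant is a product of three nonzero triangle areas, so `C` is a genuine conic.
The centroid is the common midpoint of the three segments `G_pq G_rs`.
-/

/-- `P` lies on the affine conic `a x² + b x y + c y² + d x + e y + f = 0`. -/
def OnConic2 (a b c d e f : ℝ) (P : ℝ × ℝ) : Prop :=
  a * P.1 ^ 2 + b * P.1 * P.2 + c * P.2 ^ 2 + d * P.1 + e * P.2 + f = 0

section Centroid

variable {R V : Type*} [Field R] [CharZero R] [AddCommGroup V] [Module R V]

theorem midpoint_midpoint_eq_smul_add (a b c d : V) :
    midpoint R (midpoint R a b) (midpoint R c d) = (4 : R)⁻¹ • (a + b + c + d) := by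
  simp only [midpoint_eq_smul_add, invOf_eq_inv]
  module

theorem collinear_midpoint_midpoint_smul_add (a b c d : V) :
    Collinear R {midpoint R a b, midpoint R c d, (4 : R)⁻¹ • (a + b + c + d)} := by
  rw [← midpoint_midpoint_eq_smul_add, Set.pair_comm, Set.insert_comm]
  exact collinear_insert_of_mem_affineSpan_pair (AffineMap.lineMap_mem_affineSpan_pair _ _ _)

end Centroid

namespace Plane

variable {K : Type*} [Field K]

def cross (u v : K × K) : K := u.1 * v.2 - u.2 * v.1

def dot (u v : K × K) : K := u.1 * v.1 + u.2 * v.2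

@[simp] theorem cross_self (u : K × K) : cross u u = 0 := by
  simp only [cross]; ring

@[simp] theorem cross_zero_right (u : K × K) : cross u 0 = 0 := by
  simp [cross]

theorem cross_eq_zero_of_dot_eq_zero {u v w : K × K} (hw : w ≠ 0) (hu : dot u w = 0)
    (hv : dot v w = 0) : cross u v = 0 := by
  have h1 : cross u v * w.1 = 0 := by
    simp only [cross, dot] at hu hv ⊢; linear_combination v.2 * hu - u.2 * hv
  have h2 : cross u v * w.2 = 0 := by
    simp only [cross, dot] at hu hv ⊢; linear_combination u.1 * hv - v.1 * hu
  by_contra h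
  exact hw (Prod.ext ((mul_eq_zero.1 h1).resolve_left h) ((mul_eq_zero.1 h2).resolve_left h))

theorem exists_eq_smul_of_cross_eq_zero {u w : K × K} (hu : u ≠ 0) (h : cross u w = 0) :
    ∃ t : K, w = t • u := by
  simp only [cross] at h
  by_cases h1 : u.1 = 0
  · have h2 : u.2 ≠ 0 := fun h2 ↦ hu (Prod.ext h1 h2)
    refine ⟨w.2 / u.2, Prod.ext ?_ ?_⟩ <;>
      simp only [Prod.smul_fst, Prod.smul_snd, smul_eq_mul]
    · field_simp
      linear_combination -h
    · field_simp
  · refine ⟨w.1 / u.1, Prod.ext ?_ ?_⟩ <;>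
      simp only [Prod.smul_fst, Prod.smul_snd, smul_eq_mul]
    · field_simp
    · field_simp
      linear_combination h

theorem collinear_iff_cross_eq_zero (A B C : K × K) :
    Collinear K {A, B, C} ↔ cross (B - A) (C - A) = 0 := by
  constructor
  · rw [collinear_iff_of_mem (Set.mem_insert A _)]
    rintro ⟨v, hv⟩
    obtain ⟨r, rfl⟩ := hv B (by simp)
    obtain ⟨s, rfl⟩ := hv C (by simp)
    simp only [cross, vadd_eq_add, add_sub_cancel_right, Prod.smul_fst, Prod.smul_snd, smul_eq_mul]
    ring
  · intro h
    rcases eq_or_ne B A with rfl | hBA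
    · simpa using collinear_pair K B C
    obtain ⟨t, ht⟩ := exists_eq_smul_of_cross_eq_zero (sub_ne_zero.2 hBA) h
    refine (collinear_iff_of_mem (Set.mem_insert A _)).2 ⟨B - A, ?_⟩
    simp only [Set.mem_insert_iff, Set.mem_singleton_iff]
    rintro p (rfl | rfl | rfl)
    · exact ⟨0, by simp⟩
    · exact ⟨1, by simp⟩
    · exact ⟨t, by rw [vadd_eq_add, ← ht, sub_add_cancel]⟩

structure AffineFun (K : Type*) where
  grad : K × K
  const : K

namespace AffineFun

def eval (ℓ : AffineFun K) (P : K × K) : K := dot ℓ.grad P + ℓ.const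

def through (A B : K × K) : AffineFun K := ⟨(A.2 - B.2, B.1 - A.1), cross A B⟩

@[simp] theorem eval_through (A B P : K × K) : (through A B).eval P = cross (B - A) (P - A) := by
  simp only [eval, through, dot, cross, Prod.fst_sub, Prod.snd_sub]; ring

theorem eval_through_eq_zero_iff {A B P : K × K} :
    (through A B).eval P = 0 ↔ Collinear K {A, B, P} := by
  rw [eval_through, collinear_iff_cross_eq_zero]

end AffineFun

structure Quadric (K : Type*) where
  (a b c d e f : K)

namespace Quadric

open AffineFun

def eval (Q : Quadric K) (P : K × K) : K :=
  Q.a * P.1 ^ 2 + Q.b * P.1 * P.2 + Q.c * P.2 ^ 2 + Q.d * P.1 + Q.e * P.2 + Q.f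

def grad (Q : Quadric K) (P : K × K) : K × K :=
  (2 * Q.a * P.1 + Q.b * P.2 + Q.d, Q.b * P.1 + 2 * Q.c * P.2 + Q.e)

theorem coeffs_ne_zero_of_eval_ne_zero {Q : Quadric K} {P : K × K} (h : Q.eval P ≠ 0) :
    (Q.a, Q.b, Q.c, Q.d, Q.e, Q.f) ≠ (0, 0, 0, 0, 0, 0) := by
  intro h0
  simp only [Prod.mk.injEq] at h0
  simp [eval, h0] at h

theorem eval_sub_eval [CharZero K] (Q : Quadric K) (A B : K × K) :
    Q.eval A - Q.eval B = dot (Q.grad (midpoint K A B)) (A - B) := by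
  simp only [eval, grad, dot, midpoint_eq_smul_add, invOf_eq_inv, Prod.smul_fst, Prod.smul_snd,
    Prod.fst_add, Prod.snd_add, Prod.fst_sub, Prod.snd_sub, smul_eq_mul]
  ring

def mul (ℓ m : AffineFun K) : Quadric K :=
  ⟨ℓ.grad.1 * m.grad.1, ℓ.grad.1 * m.grad.2 + ℓ.grad.2 * m.grad.1, ℓ.grad.2 * m.grad.2,
    ℓ.grad.1 * m.const + ℓ.const * m.grad.1, ℓ.grad.2 * m.const + ℓ.const * m.grad.2,
    ℓ.const * m.const⟩

@[simp] theorem eval_mul (ℓ m : AffineFun K) (P : K × K) :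
    (mul ℓ m).eval P = ℓ.eval P * m.eval P := by
  simp only [eval, mul, AffineFun.eval, dot]; ring

theorem grad_mul (ℓ m : AffineFun K) (P : K × K) :
    (mul ℓ m).grad P = ℓ.eval P • m.grad + m.eval P • ℓ.grad := by
  ext <;> simp only [grad, mul, AffineFun.eval, dot, Prod.fst_add, Prod.snd_add,
    Prod.smul_fst, Prod.smul_snd, smul_eq_mul] <;> ring

theorem grad_mul_eq_zero {ℓ m : AffineFun K} {P : K × K} (hℓ : ℓ.eval P = 0)
    (hm : m.eval P = 0) : (mul ℓ m).grad P = 0 := by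
  simp [grad_mul, hℓ, hm]

/-- The Grassmann–Plücker relation `A₁A₃ · A₂A₄ - A₁A₄ · A₂A₃ = A₁A₂ · A₃A₄`, differentiated. -/
theorem grad_mul_through_sub_grad_mul_through (A₁ A₂ A₃ A₄ P : K × K) :
    (mul (through A₁ A₃) (through A₂ A₄)).grad P -
        (mul (through A₁ A₄) (through A₂ A₃)).grad P =
      (mul (through A₁ A₂) (through A₃ A₄)).grad P := by
  ext <;> simp only [grad, mul, through, cross, Prod.fst_sub, Prod.snd_sub] <;> ring

/-- The points where `∇Q` and `∇R` are parallel: the centres of the conics `λ Q + μ R`. -/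
def centerLocus (Q R : Quadric K) : Quadric K :=
  ⟨2 * (Q.a * R.b - Q.b * R.a), 4 * (Q.a * R.c - Q.c * R.a), 2 * (Q.b * R.c - Q.c * R.b),
    2 * (Q.a * R.e - Q.e * R.a) + Q.d * R.b - Q.b * R.d,
    2 * (Q.d * R.c - Q.c * R.d) + Q.b * R.e - Q.e * R.b,
    Q.d * R.e - Q.e * R.d⟩

theorem eval_centerLocus (Q R : Quadric K) (P : K × K) :
    (Q.centerLocus R).eval P = cross (Q.grad P) (R.grad P) := by
  simp only [eval, centerLocus, grad, cross]; ring

theorem eval_centerLocus_midpoint [CharZero K] {Q R : Quadric K} {A B : K × K}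
    (hQA : Q.eval A = 0) (hQB : Q.eval B = 0) (hRA : R.eval A = 0) (hRB : R.eval B = 0)
    (hAB : A ≠ B) : (Q.centerLocus R).eval (midpoint K A B) = 0 := by
  rw [eval_centerLocus]
  refine cross_eq_zero_of_dot_eq_zero (sub_ne_zero.2 hAB) ?_ ?_
  · rw [← eval_sub_eval, hQA, hQB, sub_self]
  · rw [← eval_sub_eval, hRA, hRB, sub_self]

theorem eval_centerLocus_of_grad_left_eq_zero {Q R : Quadric K} {P : K × K}
    (h : Q.grad P = 0) : (Q.centerLocus R).eval P = 0 := by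
  simp [eval_centerLocus, h, cross]

theorem eval_centerLocus_of_grad_right_eq_zero {Q R : Quadric K} {P : K × K}
    (h : R.grad P = 0) : (Q.centerLocus R).eval P = 0 := by
  simp [eval_centerLocus, h]

theorem eval_centerLocus_of_grad_eq {Q R : Quadric K} {P : K × K}
    (h : Q.grad P = R.grad P) : (Q.centerLocus R).eval P = 0 := by
  rw [eval_centerLocus, h, cross_self]

def ninePointConic (A₁ A₂ A₃ A₄ : K × K) : Quadric K :=
  centerLocus (mul (through A₁ A₃) (through A₂ A₄)) (mul (through A₁ A₄) (through A₂ A₃))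

theorem eval_ninePointConic_left (A₁ A₂ A₃ A₄ : K × K) :
    (ninePointConic A₁ A₂ A₃ A₄).eval A₁ =
      cross (A₂ - A₁) (A₄ - A₁) * cross (A₂ - A₁) (A₃ - A₁) * cross (A₃ - A₁) (A₄ - A₁) := by
  simp only [ninePointConic, eval_centerLocus, grad_mul, eval_through, sub_self,
    cross_zero_right, zero_smul, zero_add]
  simp only [cross, through, Prod.smul_fst, Prod.smul_snd, Prod.fst_sub, Prod.snd_sub,
    smul_eq_mul]
  ring

theorem eval_ninePointConic_midpoint [CharZero K] {A₁ A₂ A₃ A₄ A B : K × K}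
    (hA : A ∈ ({A₁, A₂, A₃, A₄} : Set (K × K)))
    (hB : B ∈ ({A₁, A₂, A₃, A₄} : Set (K × K))) (hAB : A ≠ B) :
    (ninePointConic A₁ A₂ A₃ A₄).eval (midpoint K A B) = 0 := by
  have hvert : ∀ P ∈ ({A₁, A₂, A₃, A₄} : Set (K × K)),
      (mul (through A₁ A₃) (through A₂ A₄)).eval P = 0 ∧
        (mul (through A₁ A₄) (through A₂ A₃)).eval P = 0 := by
    simp only [Set.mem_insert_iff, Set.mem_singleton_iff]
    rintro P (rfl | rfl | rfl | rfl) <;> simp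
  exact eval_centerLocus_midpoint (hvert A hA).1 (hvert B hB).1 (hvert A hA).2 (hvert B hB).2 hAB

end Quadric

end Plane

open Plane Plane.AffineFun Plane.Quadric in
theorem euclidean_nine_point_conic_general (A1 A2 A3 A4 I I' Ibar : ℝ × ℝ)
    (h123 : ¬ Collinear ℝ ({A1, A2, A3} : Set (ℝ × ℝ)))
    (h124 : ¬ Collinear ℝ ({A1, A2, A4} : Set (ℝ × ℝ)))
    (h134 : ¬ Collinear ℝ ({A1, A3, A4} : Set (ℝ × ℝ)))
    (hI1 : Collinear ℝ ({A1, A3, I} : Set (ℝ × ℝ)))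
    (hI2 : Collinear ℝ ({A2, A4, I} : Set (ℝ × ℝ)))
    (hI'1 : Collinear ℝ ({A1, A4, I'} : Set (ℝ × ℝ)))
    (hI'2 : Collinear ℝ ({A2, A3, I'} : Set (ℝ × ℝ)))
    (hIbar1 : Collinear ℝ ({A1, A2, Ibar} : Set (ℝ × ℝ)))
    (hIbar2 : Collinear ℝ ({A3, A4, Ibar} : Set (ℝ × ℝ)))
    (G12 G13 G14 G23 G24 G34 O : ℝ × ℝ)
    (hG12 : G12 = midpoint ℝ A1 A2) (hG13 : G13 = midpoint ℝ A1 A3)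
    (hG14 : G14 = midpoint ℝ A1 A4) (hG23 : G23 = midpoint ℝ A2 A3)
    (hG24 : G24 = midpoint ℝ A2 A4) (hG34 : G34 = midpoint ℝ A3 A4)
    (hO : O = (4 : ℝ)⁻¹ • (A1 + A2 + A3 + A4)) :
    (∃ a b c d e f : ℝ, (a, b, c, d, e, f) ≠ (0, 0, 0, 0, 0, 0) ∧
      OnConic2 a b c d e f G12 ∧ OnConic2 a b c d e f G13 ∧
      OnConic2 a b c d e f G14 ∧ OnConic2 a b c d e f G23 ∧
      OnConic2 a b c d e f G24 ∧ OnConic2 a b c d e f G34 ∧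
      OnConic2 a b c d e f I ∧ OnConic2 a b c d e f I' ∧ OnConic2 a b c d e f Ibar) ∧
    Collinear ℝ ({G12, G34, O} : Set (ℝ × ℝ)) ∧
    Collinear ℝ ({G13, G24, O} : Set (ℝ × ℝ)) ∧
    Collinear ℝ ({G14, G23, O} : Set (ℝ × ℝ)) := by
  subst hG12 hG13 hG14 hG23 hG24 hG34 hO
  have hA₁ : (ninePointConic A1 A2 A3 A4).eval A1 ≠ 0 := by
    rw [eval_ninePointConic_left]
    simp only [ne_eq, mul_eq_zero, ← collinear_iff_cross_eq_zero, not_or]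
    exact ⟨⟨h124, h123⟩, h134⟩
  set C := ninePointConic A1 A2 A3 A4
  refine ⟨⟨C.a, C.b, C.c, C.d, C.e, C.f, coeffs_ne_zero_of_eval_ne_zero hA₁,
    ?_, ?_, ?_, ?_, ?_, ?_, ?_, ?_, ?_⟩, ?_, ?_, ?_⟩
  · exact eval_ninePointConic_midpoint (by simp) (by simp) (ne₁₂_of_not_collinear h123)
  · exact eval_ninePointConic_midpoint (by simp) (by simp) (ne₁₃_of_not_collinear h123)
  · exact eval_ninePointConic_midpoint (by simp) (by simp) (ne₁₃_of_not_collinear h124)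
  · exact eval_ninePointConic_midpoint (by simp) (by simp) (ne₂₃_of_not_collinear h123)
  · exact eval_ninePointConic_midpoint (by simp) (by simp) (ne₂₃_of_not_collinear h124)
  · exact eval_ninePointConic_midpoint (by simp) (by simp) (ne₂₃_of_not_collinear h134)
  · exact eval_centerLocus_of_grad_left_eq_zero
      (grad_mul_eq_zero (eval_through_eq_zero_iff.2 hI1) (eval_through_eq_zero_iff.2 hI2))
  · exact eval_centerLocus_of_grad_right_eq_zero
      (grad_mul_eq_zero (eval_through_eq_zero_iff.2 hI'1) (eval_through_eq_zero_iff.2 hI'2))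
  · refine eval_centerLocus_of_grad_eq (sub_eq_zero.1 ?_)
    rw [grad_mul_through_sub_grad_mul_through]
    exact grad_mul_eq_zero (eval_through_eq_zero_iff.2 hIbar1) (eval_through_eq_zero_iff.2 hIbar2)
  · exact collinear_midpoint_midpoint_smul_add A1 A2 A3 A4
  · rw [add_right_comm A1 A2 A3]
    exact collinear_midpoint_midpoint_smul_add A1 A3 A2 A4
  · rw [show A1 + A2 + A3 + A4 = A1 + A4 + (A2 + A3) by abel, ← add_assoc]
    exact collinear_midpoint_midpoint_smul_add A1 A4 A2 A3

/-- **Euclidean nine-point conic.** Let `A₁, A₂, A₃, A₄` be four points in the plane,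
no three collinear, with the three pairs of opposite sides non-parallel, and let
`I = A₁A₃ ∩ A₂A₄`, `I' = A₁A₄ ∩ A₂A₃`, `Ī = A₁A₂ ∩ A₃A₄` be the diagonal points.
Then the six midpoints of the segments `A_pA_q` and the three diagonal points lie
on a common conic, and the three lines joining midpoints of opposite sides are
concurrent at the centroid `(A₁ + A₂ + A₃ + A₄)/4`. -/
theorem euclidean_nine_point_conic (A1 A2 A3 A4 I I' Ibar : ℝ × ℝ)
    (h123 : ¬ Collinear ℝ ({A1, A2, A3} : Set (ℝ × ℝ)))
    (h124 : ¬ Collinear ℝ ({A1, A2, A4} : Set (ℝ × ℝ)))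
    (h134 : ¬ Collinear ℝ ({A1, A3, A4} : Set (ℝ × ℝ)))
    (h234 : ¬ Collinear ℝ ({A2, A3, A4} : Set (ℝ × ℝ)))
    (hnp1 : ¬ ∃ t : ℝ, A4 - A2 = t • (A3 - A1))
    (hnp2 : ¬ ∃ t : ℝ, A3 - A2 = t • (A4 - A1))
    (hnp3 : ¬ ∃ t : ℝ, A4 - A3 = t • (A2 - A1))
    (hI1 : Collinear ℝ ({A1, A3, I} : Set (ℝ × ℝ)))
    (hI2 : Collinear ℝ ({A2, A4, I} : Set (ℝ × ℝ)))
    (hI'1 : Collinear ℝ ({A1, A4, I'} : Set (ℝ × ℝ)))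
    (hI'2 : Collinear ℝ ({A2, A3, I'} : Set (ℝ × ℝ)))
    (hIbar1 : Collinear ℝ ({A1, A2, Ibar} : Set (ℝ × ℝ)))
    (hIbar2 : Collinear ℝ ({A3, A4, Ibar} : Set (ℝ × ℝ)))
    (G12 G13 G14 G23 G24 G34 O : ℝ × ℝ)
    (hG12 : G12 = midpoint ℝ A1 A2) (hG13 : G13 = midpoint ℝ A1 A3)
    (hG14 : G14 = midpoint ℝ A1 A4) (hG23 : G23 = midpoint ℝ A2 A3)
    (hG24 : G24 = midpoint ℝ A2 A4) (hG34 : G34 = midpoint ℝ A3 A4)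
    (hO : O = (4 : ℝ)⁻¹ • (A1 + A2 + A3 + A4)) :
    (∃ a b c d e f : ℝ, (a, b, c, d, e, f) ≠ (0, 0, 0, 0, 0, 0) ∧
      OnConic2 a b c d e f G12 ∧ OnConic2 a b c d e f G13 ∧
      OnConic2 a b c d e f G14 ∧ OnConic2 a b c d e f G23 ∧
      OnConic2 a b c d e f G24 ∧ OnConic2 a b c d e f G34 ∧
      OnConic2 a b c d e f I ∧ OnConic2 a b c d e f I' ∧ OnConic2 a b c d e f Ibar) ∧
    Collinear ℝ ({G12, G34, O} : Set (ℝ × ℝ)) ∧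
    Collinear ℝ ({G13, G24, O} : Set (ℝ × ℝ)) ∧
    Collinear ℝ ({G14, G23, O} : Set (ℝ × ℝ)) :=
  euclidean_nine_point_conic_general A1 A2 A3 A4 I I' Ibar h123 h124 h134 hI1 hI2 hI'1 hI'2 hIbar1
    hIbar2 G12 G13 G14 G23 G24 G34 O hG12 hG13 hG14 hG23 hG24 hG34 hO
end
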